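/- arXiv:1905.09101 — 5 statements merged into one kernel-verified Lean document; each statement's English description precedes it below -/
import Mathlib

section
/- For every integer k ≥ 2, the graph W_k is 3-regular and Hamiltonian (i.e., it contains a cycle passing through all 4k of its vertices). -/
/-- Vertices of `W k`: `Sum.inl i` is the cycle vertex `vᵢ` (for `i ∈ Fin (3k)`),
`Sum.inr i` is the hub vertex `uᵢ` (for `i ∈ Fin k`). -/
abbrev WV (k : ℕ) := Fin (3*k) ⊕ Fin k

/-- Generating relation for the edges of `W k`: the cycle `v₀ v₁ … v_{3k-1} v₀`
together with the edges `uᵢ v_{3i}`, `uᵢ v_{3i+1}`, `uᵢ v_{3i+2}`. -/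
def WRel (k : ℕ) : WV k → WV k → Prop
  | Sum.inl i, Sum.inl j => (j : ℕ) = ((i : ℕ) + 1) % (3*k)
  | Sum.inr i, Sum.inl j =>
      (j : ℕ) = 3*(i : ℕ) ∨ (j : ℕ) = 3*(i : ℕ) + 1 ∨ (j : ℕ) = 3*(i : ℕ) + 2
  | _, _ => False

/-- The graph `W k`. -/
def W (k : ℕ) : SimpleGraph (WV k) := SimpleGraph.fromRel (WRel k)


namespace WAux
open SimpleGraph

variable {V : Type*} {G : SimpleGraph V}

/-- Walk along `f 0, f 1, …, f n`. -/
def walkFn (f : ℕ → V) : (n : ℕ) → (∀ i < n, G.Adj (f i) (f (i+1))) → G.Walk (f 0) (f n)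
  | 0, _ => SimpleGraph.Walk.nil
  | n+1, h => (walkFn f n (fun i hi => h i (by omega))).concat (h n (by omega))

lemma support_walkFn (f : ℕ → V) (n : ℕ) (h : ∀ i < n, G.Adj (f i) (f (i+1))) :
    (walkFn f n h).support = (List.range (n+1)).map f := by
  induction n with
  | zero => simp [walkFn, List.range_succ]
  | succ n ih =>
    rw [walkFn, SimpleGraph.Walk.support_concat, ih, List.range_succ (n := n+1)]
    simp

lemma edges_walkFn (f : ℕ → V) (n : ℕ) (h : ∀ i < n, G.Adj (f i) (f (i+1))) :
    (walkFn f n h).edges = (List.range n).map (fun i => s(f i, f (i+1))) := by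
  induction n with
  | zero => simp [walkFn]
  | succ n ih =>
    rw [walkFn, SimpleGraph.Walk.edges_concat, ih, List.range_succ]
    simp

lemma exists_hamCycle (f : ℕ → V) (n : ℕ) (hn : 3 ≤ n)
    (hadj : ∀ i < n, G.Adj (f i) (f (i+1)))
    (hfn : f n = f 0)
    (hinj : ∀ i < n, ∀ j < n, f i = f j → i = j) :
    ∃ c : G.Walk (f 0) (f 0), c.IsCycle ∧ ∀ i < n, f i ∈ c.support := by
  obtain ⟨m, rfl⟩ : ∃ m, n = m + 1 := ⟨n - 1, by omega⟩
  set g : ℕ → V := fun i => f (i + 1) with hg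
  have hadj' : ∀ i < m, G.Adj (g i) (g (i+1)) := fun i hi => hadj (i+1) (by omega)
  let p0 : G.Walk (f 1) (f (m+1)) := walkFn g m hadj'
  let p : G.Walk (f 1) (f 0) := p0.copy rfl hfn
  have hsupp : p.support = (List.range (m+1)).map g := by
    simp only [p, SimpleGraph.Walk.support_copy]
    exact support_walkFn g m hadj'
  have hedges : p.edges = (List.range m).map (fun i => s(g i, g (i+1))) := by
    simp only [p, SimpleGraph.Walk.edges_copy]
    exact edges_walkFn g m hadj'
  refine ⟨SimpleGraph.Walk.cons (hadj 0 (by omega)) p, ?_, ?_⟩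
  · rw [SimpleGraph.Walk.cons_isCycle_iff]
    constructor
    · apply SimpleGraph.Walk.IsPath.mk'
      rw [hsupp]
      refine List.Nodup.map_on ?_ List.nodup_range
      intro x hx y hy hxy
      simp only [List.mem_range] at hx hy
      simp only [hg] at hxy
      rcases Nat.lt_or_ge (x+1) (m+1) with h1 | h1
      · rcases Nat.lt_or_ge (y+1) (m+1) with h2 | h2
        · have := hinj _ h1 _ h2 hxy; omega
        · have hy1 : y + 1 = m + 1 := by omega
          rw [hy1, hfn] at hxy
          have := hinj _ h1 _ (by omega) hxy; omega
      · have hx1 : x + 1 = m + 1 := by omega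
        rcases Nat.lt_or_ge (y+1) (m+1) with h2 | h2
        · rw [hx1, hfn] at hxy
          have := hinj _ (by omega : (0:ℕ) < m+1) _ h2 hxy; omega
        · omega
    · rw [hedges]
      intro hmem
      simp only [List.mem_map, List.mem_range] at hmem
      obtain ⟨i, hi, hEq⟩ := hmem
      simp only [hg, Sym2.eq, Sym2.rel_iff', Prod.mk.injEq, Prod.swap_prod_mk] at hEq
      rcases hEq with ⟨h1, h2⟩ | ⟨h1, h2⟩
      · have := hinj (i+1) (by omega) 0 (by omega) h1; omega
      · have e1 := hinj (i+1) (by omega) 1 (by omega) h1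
        have hi0 : i = 0 := by omega
        subst hi0
        have := hinj 2 (by omega) 0 (by omega) h2; omega
  · intro i hi
    rw [SimpleGraph.Walk.support_cons]
    rcases Nat.eq_zero_or_pos i with rfl | hipos
    · exact List.mem_cons_self
    · apply List.mem_cons_of_mem
      rw [hsupp]
      simp only [List.mem_map, List.mem_range, hg]
      exact ⟨i - 1, by omega, by congr 1; omega⟩

end WAux

namespace WAux2

lemma adj_inl_inl {k : ℕ} (i j : Fin (3*k)) :
    (W k).Adj (Sum.inl i) (Sum.inl j) ↔
      i ≠ j ∧ ((j : ℕ) = ((i : ℕ) + 1) % (3*k) ∨ (i : ℕ) = ((j : ℕ) + 1) % (3*k)) := by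
  simp [W, SimpleGraph.fromRel_adj, WRel]

lemma adj_inl_inr {k : ℕ} (j : Fin (3*k)) (i : Fin k) :
    (W k).Adj (Sum.inl j) (Sum.inr i) ↔
      ((j : ℕ) = 3*(i : ℕ) ∨ (j : ℕ) = 3*(i : ℕ) + 1 ∨ (j : ℕ) = 3*(i : ℕ) + 2) := by
  simp [W, SimpleGraph.fromRel_adj, WRel]

lemma adj_inr_inl {k : ℕ} (i : Fin k) (j : Fin (3*k)) :
    (W k).Adj (Sum.inr i) (Sum.inl j) ↔
      ((j : ℕ) = 3*(i : ℕ) ∨ (j : ℕ) = 3*(i : ℕ) + 1 ∨ (j : ℕ) = 3*(i : ℕ) + 2) := by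
  simp [W, SimpleGraph.fromRel_adj, WRel]

lemma not_adj_inr_inr {k : ℕ} (i i' : Fin k) : ¬ (W k).Adj (Sum.inr i) (Sum.inr i') := by
  simp [W, SimpleGraph.fromRel_adj, WRel]

end WAux2

namespace WAux2

/-- The Hamiltonian ordering: block `q` is `v_{3q}, v_{3q+1}, u_q, v_{3q+2}`. -/
def ham (k : ℕ) (hk : 0 < k) (t : ℕ) : WV k :=
  if h : t % 4 = 2 ∧ t < 4*k then
    Sum.inr ⟨t/4, by omega⟩
  else
    Sum.inl ⟨if t % 4 = 2 ∨ 4*k ≤ t then 0 else 3*(t/4) + min (t%4) 2, by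
      split <;> omega⟩

lemma ham_inr {k : ℕ} (hk : 0 < k) {t : ℕ} (h2 : t % 4 = 2) (ht : t < 4*k) :
    ham k hk t = Sum.inr ⟨t/4, by omega⟩ := by
  rw [ham, dif_pos ⟨h2, ht⟩]

lemma ham_inl {k : ℕ} (hk : 0 < k) {t : ℕ} (h2 : t % 4 ≠ 2) (ht : t < 4*k) :
    ham k hk t = Sum.inl ⟨3*(t/4) + min (t%4) 2, by omega⟩ := by
  rw [ham, dif_neg (by tauto)]
  congr 1
  exact Fin.ext (by simp only [if_neg (show ¬(t % 4 = 2 ∨ 4*k ≤ t) by omega)])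

lemma ham_zero {k : ℕ} (hk : 0 < k) : ham k hk 0 = Sum.inl ⟨0, by omega⟩ := by
  rw [ham_inl hk (by omega) (by omega)]
  congr 1

lemma ham_top {k : ℕ} (hk : 0 < k) : ham k hk (4*k) = ham k hk 0 := by
  rw [ham_zero, ham, dif_neg (by omega)]
  congr 1
  exact Fin.ext (by simp)

lemma ham_inj {k : ℕ} (hk : 0 < k) :
    ∀ i < 4*k, ∀ j < 4*k, ham k hk i = ham k hk j → i = j := by
  intro i hi j hj hEq
  by_cases h2 : i % 4 = 2
  · by_cases h2' : j % 4 = 2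
    · rw [ham_inr hk h2 hi, ham_inr hk h2' hj] at hEq
      simp only [Sum.inr.injEq, Fin.mk.injEq] at hEq
      omega
    · rw [ham_inr hk h2 hi, ham_inl hk h2' hj] at hEq
      exact absurd hEq (by simp)
  · by_cases h2' : j % 4 = 2
    · rw [ham_inl hk h2 hi, ham_inr hk h2' hj] at hEq
      exact absurd hEq (by simp)
    · rw [ham_inl hk h2 hi, ham_inl hk h2' hj] at hEq
      simp only [Sum.inl.injEq, Fin.mk.injEq] at hEq
      omega

lemma ham_surj {k : ℕ} (hk : 0 < k) (w : WV k) : ∃ t < 4*k, ham k hk t = w := by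
  rcases w with j | i
  · refine ⟨4*((j:ℕ)/3) + (if (j:ℕ) % 3 = 2 then 3 else (j:ℕ) % 3), ?_, ?_⟩
    · have := j.isLt; split <;> omega
    · have hj := j.isLt
      rw [ham_inl hk (by split <;> omega) (by split <;> omega)]
      congr 1
      refine Fin.ext ?_
      simp only
      split <;> omega
  · refine ⟨4*(i:ℕ) + 2, by have := i.isLt; omega, ?_⟩
    have hi := i.isLt
    rw [ham_inr hk (by omega) (by omega)]
    congr 1
    exact Fin.ext (by simp; omega)

end WAux2

namespace WAux2

lemma ham_adj {k : ℕ} (hk : 0 < k) : ∀ t < 4*k, (W k).Adj (ham k hk t) (ham k hk (t+1)) := by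
  intro t ht
  have h4 : t % 4 = 0 ∨ t % 4 = 1 ∨ t % 4 = 2 ∨ t % 4 = 3 := by omega
  rcases h4 with h4 | h4 | h4 | h4
  · -- v_{3q} → v_{3q+1}
    rw [ham_inl hk (by omega) ht, ham_inl hk (by omega) (by omega)]
    rw [adj_inl_inl]
    refine ⟨by simp [Fin.ext_iff]; omega, Or.inl ?_⟩
    show 3*((t+1)/4) + min ((t+1)%4) 2 = (3*(t/4) + min (t%4) 2 + 1) % (3*k)
    have hmod : (3*(t/4) + min (t%4) 2 + 1) % (3*k) = 3*(t/4) + min (t%4) 2 + 1 :=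
      Nat.mod_eq_of_lt (by omega)
    rw [hmod]; omega
  · -- v_{3q+1} → u_q
    rw [ham_inl hk (by omega) ht, ham_inr hk (by omega) (by omega)]
    rw [adj_inl_inr]
    show 3*(t/4) + min (t%4) 2 = 3*((t+1)/4) ∨ 3*(t/4) + min (t%4) 2 = 3*((t+1)/4) + 1 ∨ 3*(t/4) + min (t%4) 2 = 3*((t+1)/4) + 2
    omega
  · -- u_q → v_{3q+2}
    rw [ham_inr hk (by omega) ht, ham_inl hk (by omega) (by omega)]
    rw [adj_inr_inl]
    show 3*((t+1)/4) + min ((t+1)%4) 2 = 3*(t/4) ∨ 3*((t+1)/4) + min ((t+1)%4) 2 = 3*(t/4) + 1 ∨ 3*((t+1)/4) + min ((t+1)%4) 2 = 3*(t/4) + 2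
    omega
  · -- v_{3q+2} → v_{3q+3} (or wrap to v_0)
    by_cases htop : t + 1 < 4*k
    · rw [ham_inl hk (by omega) ht, ham_inl hk (by omega) htop]
      rw [adj_inl_inl]
      refine ⟨by simp [Fin.ext_iff]; omega, Or.inl ?_⟩
      show 3*((t+1)/4) + min ((t+1)%4) 2 = (3*(t/4) + min (t%4) 2 + 1) % (3*k)
      have hmod : (3*(t/4) + min (t%4) 2 + 1) % (3*k) = 3*(t/4) + min (t%4) 2 + 1 :=
        Nat.mod_eq_of_lt (by omega)
      rw [hmod]; omega
    · have hteq : t + 1 = 4*k := by omega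
      rw [ham_inl hk (by omega) ht, hteq, ham_top, ham_zero]
      rw [adj_inl_inl]
      refine ⟨by simp [Fin.ext_iff]; omega, Or.inl ?_⟩
      show (0:ℕ) = (3*(t/4) + min (t%4) 2 + 1) % (3*k)
      have h5 : 3*(t/4) + min (t%4) 2 + 1 = 3*k := by omega
      rw [h5, Nat.mod_self]

end WAux2

namespace WAux2

lemma mod_succ_ite {m x : ℕ} (hx : x < m) : (x+1) % m = if x+1 = m then 0 else x+1 := by
  split
  · rename_i h; rw [h, Nat.mod_self]
  · exact Nat.mod_eq_of_lt (by omega)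

lemma W_regular (k : ℕ) (hk : 2 ≤ k) [inst : (W k).LocallyFinite] :
    (W k).IsRegularOfDegree 3 := by
  intro v
  show ((W k).neighborFinset v).card = 3
  rcases v with j | i
  · have hj := j.isLt
    have hfin : (W k).neighborFinset (Sum.inl j) =
        {Sum.inl ⟨if (j:ℕ)+1 = 3*k then 0 else (j:ℕ)+1, by split <;> omega⟩,
         Sum.inl ⟨if (j:ℕ) = 0 then 3*k-1 else (j:ℕ)-1, by split <;> omega⟩,
         Sum.inr ⟨(j:ℕ)/3, by omega⟩} := by
      ext w
      rw [SimpleGraph.mem_neighborFinset]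
      rcases w with j' | i'
      · have hj' := j'.isLt
        rw [adj_inl_inl, mod_succ_ite hj, mod_succ_ite hj']
        simp only [Finset.mem_insert, Finset.mem_singleton, Sum.inl.injEq, Ne,
          Fin.ext_iff, reduceCtorEq, or_false]
        split_ifs <;> omega
      · rw [adj_inl_inr]
        simp only [Finset.mem_insert, Finset.mem_singleton, Sum.inr.injEq,
          Fin.ext_iff, reduceCtorEq, false_or]
        omega
    rw [hfin]
    rw [Finset.card_insert_of_notMem (by
      simp only [Finset.mem_insert, Finset.mem_singleton, Sum.inl.injEq, Fin.ext_iff,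
        reduceCtorEq, or_false]
      split_ifs <;> omega)]
    rw [Finset.card_insert_of_notMem (by simp)]
    simp
  · have hi := i.isLt
    have hfin : (W k).neighborFinset (Sum.inr i) =
        {Sum.inl ⟨3*(i:ℕ), by omega⟩, Sum.inl ⟨3*(i:ℕ)+1, by omega⟩,
         Sum.inl ⟨3*(i:ℕ)+2, by omega⟩} := by
      ext w
      rw [SimpleGraph.mem_neighborFinset]
      rcases w with j' | i'
      · rw [SimpleGraph.adj_comm, adj_inl_inr]
        simp only [Finset.mem_insert, Finset.mem_singleton, Sum.inl.injEq, Fin.ext_iff] <;>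
          omega
      · simp only [not_adj_inr_inr, Finset.mem_insert, Finset.mem_singleton,
          reduceCtorEq, or_self, false_iff] <;> tauto
    rw [hfin]
    rw [Finset.card_insert_of_notMem (by
      simp only [Finset.mem_insert, Finset.mem_singleton, Sum.inl.injEq, Fin.ext_iff]
      omega)]
    rw [Finset.card_insert_of_notMem (by
      simp only [Finset.mem_singleton, Sum.inl.injEq, Fin.ext_iff]
      omega)]
    simp

end WAux2


open scoped Classical in
/-- For every integer `k ≥ 2`, the graph `W k` is 3-regular and Hamiltonian, i.e. it
contains a cycle passing through all of its `4k` vertices. -/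
theorem stmt_0 (k : ℕ) (hk : 2 ≤ k) :
    (W k).IsRegularOfDegree 3 ∧
    ∃ (v : WV k) (c : (W k).Walk v v), c.IsCycle ∧ ∀ w : WV k, w ∈ c.support := by
  have hk0 : 0 < k := by omega
  constructor
  · exact WAux2.W_regular k hk
  · obtain ⟨c, hc, hcov⟩ := WAux.exists_hamCycle (WAux2.ham k hk0) (4*k) (by omega)
      (WAux2.ham_adj hk0) (WAux2.ham_top hk0) (WAux2.ham_inj hk0)
    refine ⟨WAux2.ham k hk0 0, c, hc, ?_⟩
    intro w
    obtain ⟨t, ht, rfl⟩ := WAux2.ham_surj hk0 w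
    exact hcov t ht
end

section
/- For every integer k ≥ 2, the graph W_k contains no cycle of length ℓ with 5 ≤ ℓ ≤ 3k−1, while it contains a cycle of length 3k; consequently, for all a, b with 5 ≤ a ≤ b ≤ 3k−1, W_k has no cycle whose length lies in the interval [a, b] but has a cycle longer than b. -/
namespace WAux

open SimpleGraph Walk

variable {k : ℕ}

/-- fan index of a vertex -/
def fanN : WV k → ℕ
  | Sum.inl j => (j : ℕ) / 3
  | Sum.inr i => (i : ℕ)

/-- cycle vertex with index `m % 3k` -/
def cv (hk : 2 ≤ k) (m : ℕ) : WV k :=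
  Sum.inl ⟨m % (3*k), Nat.mod_lt _ (by omega)⟩

/-- the `i`-th cut edge, joining `v_{3i+2}` to `v_{3i+3}` -/
def cutE (hk : 2 ≤ k) (i : ℕ) : Sym2 (WV k) :=
  s(cv hk (3*i+2), cv hk (3*i+3))

lemma cv_eq (hk : 2 ≤ k) {m : ℕ} (hm : m < 3*k) :
    cv hk m = Sum.inl ⟨m, hm⟩ := by
  simp [cv, Fin.ext_iff, Nat.mod_eq_of_lt hm]

lemma W_adj {x y : WV k} : (W k).Adj x y ↔ x ≠ y ∧ (WRel k x y ∨ WRel k y x) := by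
  rw [W, SimpleGraph.fromRel_adj]

lemma fanN_lt (hk : 2 ≤ k) (x : WV k) : fanN x < k := by
  cases x with
  | inl j => have := j.isLt; simp only [fanN]; omega
  | inr i => exact i.isLt

/-- classification of one direction of the cycle relation -/
lemma classify_aux (hk : 2 ≤ k) (a b : Fin (3*k)) (hb : (b : ℕ) = ((a : ℕ) + 1) % (3*k)) :
    fanN (Sum.inl a : WV k) = fanN (Sum.inl b) ∨
      ∃ i < k, s((Sum.inl a : WV k), Sum.inl b) = cutE hk i ∧
        fanN (Sum.inl a : WV k) = i ∧ fanN (Sum.inl b : WV k) = (i+1) % k := by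
  have ha := a.isLt
  by_cases hlt : (a : ℕ) + 1 < 3*k
  · have hb' : (b : ℕ) = (a : ℕ) + 1 := by rw [hb, Nat.mod_eq_of_lt hlt]
    by_cases h3 : (a : ℕ) % 3 = 2
    · right
      refine ⟨(a : ℕ)/3, by omega, ?_, by simp [fanN], ?_⟩
      · have e1 : cv hk (3*((a:ℕ)/3)+2) = Sum.inl a := by
          rw [cv_eq hk (by omega)]; simp [Fin.ext_iff]; omega
        have e2 : cv hk (3*((a:ℕ)/3)+3) = Sum.inl b := by
          rw [cv_eq hk (by omega)]; simp [Fin.ext_iff]; omega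
        rw [cutE, e1, e2]
      · have : (a:ℕ)/3 + 1 < k := by omega
        rw [Nat.mod_eq_of_lt this]; simp [fanN]; omega
    · left; simp [fanN]; omega
  · -- wrap-around : a = 3k - 1, b = 0
    have ha' : (a : ℕ) + 1 = 3*k := by omega
    have hb' : (b : ℕ) = 0 := by rw [hb, ha', Nat.mod_self]
    right
    refine ⟨k-1, by omega, ?_, ?_, ?_⟩
    · have e1 : cv hk (3*(k-1)+2) = Sum.inl a := by
        rw [cv_eq hk (by omega)]; simp [Fin.ext_iff]; omega
      have e2 : cv hk (3*(k-1)+3) = Sum.inl b := by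
        have h33 : 3*(k-1)+3 = 3*k := by omega
        simp only [cutE, cv, h33, Nat.mod_self]
        simp [Fin.ext_iff, hb']
      rw [cutE, e1, e2]
    · simp [fanN]; omega
    · have : (k-1)+1 = k := by omega
      rw [this, Nat.mod_self]; simp [fanN, hb']

/-- classification of adjacency: either the fans agree or the edge is a cut edge -/
lemma classify (hk : 2 ≤ k) {x y : WV k} (h : (W k).Adj x y) :
    fanN x = fanN y ∨
      ∃ i < k, s(x, y) = cutE hk i ∧
        ((fanN x = i ∧ fanN y = (i+1) % k) ∨ (fanN y = i ∧ fanN x = (i+1) % k)) := by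
  rw [W_adj] at h
  obtain ⟨hne, hrel | hrel⟩ := h
  · cases x with
    | inl a =>
      cases y with
      | inl b =>
        rcases classify_aux hk a b hrel with h | ⟨i, hi, hs, h1, h2⟩
        · exact Or.inl h
        · exact Or.inr ⟨i, hi, hs, Or.inl ⟨h1, h2⟩⟩
      | inr => exact (hrel : False).elim
    | inr a =>
      cases y with
      | inl b =>
        left
        have hrel' : (b : ℕ) = 3*(a : ℕ) ∨ (b : ℕ) = 3*(a : ℕ)+1 ∨ (b : ℕ) = 3*(a : ℕ)+2 := hrel
        show (a : ℕ) = (b : ℕ)/3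
        omega
      | inr => exact (hrel : False).elim
  · cases y with
    | inl b =>
      cases x with
      | inl a =>
        rcases classify_aux hk b a hrel with h | ⟨i, hi, hs, h1, h2⟩
        · exact Or.inl h.symm
        · exact Or.inr ⟨i, hi, by rwa [Sym2.eq_swap], Or.inr ⟨h1, h2⟩⟩
      | inr a => exact (hrel : False).elim
    | inr i =>
      cases x with
      | inl a =>
        left
        have hrel' : (a : ℕ) = 3*(i : ℕ) ∨ (a : ℕ) = 3*(i : ℕ)+1 ∨ (a : ℕ) = 3*(i : ℕ)+2 := hrel
        show (a : ℕ)/3 = (i : ℕ)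
        omega
      | inr => exact (hrel : False).elim

lemma fanN_cv (hk : 2 ≤ k) (m : ℕ) : fanN (cv hk m) = (m % (3*k)) / 3 := rfl

/-- fans of the endpoints of a cut edge -/
lemma cutE_fst_fan (hk : 2 ≤ k) {i : ℕ} (hi : i < k) :
    fanN (cv hk (3*i+2)) = i := by
  rw [fanN_cv, Nat.mod_eq_of_lt (by omega)]; omega

lemma cutE_snd_fan (hk : 2 ≤ k) {i : ℕ} (hi : i < k) :
    fanN (cv hk (3*i+3)) = (i+1) % k := by
  by_cases h : i + 1 < k
  · rw [fanN_cv, Nat.mod_eq_of_lt (by omega), Nat.mod_eq_of_lt h]; omega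
  · have h1 : i + 1 = k := by omega
    have h2 : 3*i+3 = 3*k := by omega
    rw [fanN_cv, h2, Nat.mod_self, h1, Nat.mod_self]

lemma succ_mod_ne (hk : 2 ≤ k) {i : ℕ} (hi : i < k) : (i+1) % k ≠ i := by
  by_cases h : i + 1 < k
  · rw [Nat.mod_eq_of_lt h]; omega
  · have h1 : i + 1 = k := by omega
    rw [h1, Nat.mod_self]; omega

lemma cutE_inj (hk : 2 ≤ k) {i j : ℕ} (hi : i < k) (hj : j < k)
    (h : cutE hk i = cutE hk j) : i = j := by
  rw [cutE, cutE, Sym2.eq_iff] at h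
  have e1 : (3*i+2) % (3*k) = 3*i+2 := Nat.mod_eq_of_lt (by omega)
  have e2 : (3*j+2) % (3*k) = 3*j+2 := Nat.mod_eq_of_lt (by omega)
  have e3 : (3*i+3) % (3*k) = if i+1 < k then 3*i+3 else 0 := by
    split <;> rename_i h'
    · exact Nat.mod_eq_of_lt (by omega)
    · have : 3*i+3 = 3*k := by omega
      rw [this, Nat.mod_self]
  have e4 : (3*j+3) % (3*k) = if j+1 < k then 3*j+3 else 0 := by
    split <;> rename_i h'
    · exact Nat.mod_eq_of_lt (by omega)
    · have : 3*j+3 = 3*k := by omega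
      rw [this, Nat.mod_self]
  rcases h with ⟨h1, h2⟩ | ⟨h1, h2⟩
  · simp only [cv, Sum.inl.injEq, Fin.ext_iff] at h1 h2
    split at e3 <;> split at e4 <;> omega
  · simp only [cv, Sum.inl.injEq, Fin.ext_iff] at h1 h2
    split at e3 <;> split at e4 <;> omega

/-- prev index -/
lemma prev_formula (hk : 2 ≤ k) {i : ℕ} (hi : i < k) :
    (i + (k-1)) % k = if i = 0 then k - 1 else i - 1 := by
  split <;> rename_i h
  · subst h; simpa using Nat.mod_eq_of_lt (by omega : k - 1 < k)
  · have : i + (k-1) = k + (i-1) := by omega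
    rw [this, Nat.add_mod_left, Nat.mod_eq_of_lt (by omega)]

lemma succ_eq_iff_prev (hk : 2 ≤ k) {i i0 : ℕ} (hi : i < k) (hi0 : i0 < k) :
    ((i+1) % k = i0) ↔ (i = (i0 + (k-1)) % k) := by
  rw [prev_formula hk hi0]
  by_cases h : i + 1 < k
  · rw [Nat.mod_eq_of_lt h]; split <;> omega
  · have h1 : i + 1 = k := by omega
    rw [h1, Nat.mod_self]; split <;> omega

lemma prev_ne (hk : 2 ≤ k) {i0 : ℕ} (hi0 : i0 < k) : (i0 + (k-1)) % k ≠ i0 := by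
  rw [prev_formula hk hi0]; split <;> omega

lemma prev_lt (hk : 2 ≤ k) {i0 : ℕ} (hi0 : i0 < k) : (i0 + (k-1)) % k < k := by
  rw [prev_formula hk hi0]; split <;> omega

lemma zmod2_add_self (x : ZMod 2) : x + x = 0 := by
  rw [← two_mul, show (2 : ZMod 2) = 0 from by decide, zero_mul]

/-- telescoping sums in `ZMod 2` over the darts of a walk -/
lemma tele2 (F : WV k → ZMod 2) {u v : WV k} (p : (W k).Walk u v) :
    (p.darts.map fun d => F d.toProd.1 + F d.toProd.2).sum = F u + F v := by
  induction p with
  | nil =>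
    simp only [Walk.darts_nil, List.map_nil, List.sum_nil]
    exact (zmod2_add_self _).symm
  | @cons u w v h p ih =>
    simp only [Walk.darts_cons, List.map_cons, List.sum_cons, ih]
    linear_combination zmod2_add_self (F w)

/-- telescoping sums in `ℤ` over the darts of a walk -/
lemma teleZ (F : WV k → ℤ) {u v : WV k} (p : (W k).Walk u v) :
    (p.darts.map fun d => F d.toProd.2 - F d.toProd.1).sum = F v - F u := by
  induction p with
  | nil => simp
  | @cons u w v h p ih =>
    simp only [Walk.darts_cons, List.map_cons, List.sum_cons, ih]
    ring

lemma sum_map_add {α : Type*} {M : Type*} [AddCommMonoid M] (l : List α) (f g : α → M) :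
    (l.map fun x => f x + g x).sum = (l.map f).sum + (l.map g).sum := by
  induction l with
  | nil => simp
  | cons a l ih => simp [ih]; abel

lemma sum_indicator2 {α : Type*} [DecidableEq α] (l : List α) (e : α) :
    (l.map fun x => if x = e then (1 : ZMod 2) else 0).sum = (l.count e : ZMod 2) := by
  induction l with
  | nil => simp
  | cons a l ih =>
    by_cases h : a = e
    · subst h
      simp only [List.map_cons, List.sum_cons, ih, List.count_cons, if_pos rfl,
        beq_self_eq_true, if_true]
      push_cast
      ring
    · simp only [List.map_cons, List.sum_cons, ih, List.count_cons, if_neg h]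
      have : (a == e) = false := by simpa using h
      simp [this]

lemma sum_indicatorZ_ne_zero {α : Type*} [DecidableEq α] (l : List α) (e : α) :
    (l.map fun x => if x = e then (1 : ℤ) else 0).sum ≠ 0 ↔ e ∈ l := by
  constructor
  · intro h
    by_contra hmem
    apply h
    apply List.sum_eq_zero
    intro x hx
    obtain ⟨a, ha, rfl⟩ := List.mem_map.mp hx
    have : a ≠ e := fun h' => hmem (h' ▸ ha)
    simp [this]
  · intro hmem h
    have h1 : (1 : ℤ) ∈ l.map fun x => if x = e then (1 : ℤ) else 0 :=
      List.mem_map.mpr ⟨e, hmem, by simp⟩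
    have := List.single_le_sum (l := l.map fun x => if x = e then (1 : ℤ) else 0)
      (fun x hx => by obtain ⟨a, _, rfl⟩ := List.mem_map.mp hx; split <;> omega) 1 h1
    omega

/-- the key parity step: a trail closed walk uses the cut edge `i0` iff it uses the
previous cut edge. -/
lemma cut_step (hk : 2 ≤ k) {v : WV k} {c : (W k).Walk v v} (hc : c.edges.Nodup)
    {i0 : ℕ} (hi0 : i0 < k) :
    (cutE hk ((i0 + (k-1)) % k) ∈ c.edges ↔ cutE hk i0 ∈ c.edges) := by
  set P := (i0 + (k-1)) % k with hP
  have hPlt : P < k := prev_lt hk hi0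
  have hPne : P ≠ i0 := prev_ne hk hi0
  set F : WV k → ZMod 2 := fun x => if fanN x = i0 then 1 else 0 with hF
  have key : ∀ d ∈ c.darts, F d.toProd.1 + F d.toProd.2 =
      (if d.edge = cutE hk i0 then (1 : ZMod 2) else 0) +
      (if d.edge = cutE hk P then (1 : ZMod 2) else 0) := by
    intro d _
    have hadj := d.adj
    have hedge : d.edge = s(d.toProd.1, d.toProd.2) := rfl
    rcases classify hk hadj with heq | ⟨i, hi, hs, hfans⟩
    · -- same fan: no cut edge, both sides 0
      have h1 : d.edge ≠ cutE hk i0 := by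
        intro h
        rw [hedge, cutE, Sym2.eq_iff] at h
        rcases h with ⟨h1, h2⟩ | ⟨h1, h2⟩ <;>
          rw [hF] at * <;>
          [rw [h1, h2, cutE_fst_fan hk hi0, cutE_snd_fan hk hi0] at heq;
           rw [h1, h2, cutE_fst_fan hk hi0, cutE_snd_fan hk hi0] at heq] <;>
          [exact absurd heq.symm (succ_mod_ne hk hi0); exact absurd heq (succ_mod_ne hk hi0)]
      have h2 : d.edge ≠ cutE hk P := by
        intro h
        rw [hedge, cutE, Sym2.eq_iff] at h
        rcases h with ⟨h1, h2⟩ | ⟨h1, h2⟩ <;>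
          [rw [h1, h2, cutE_fst_fan hk hPlt, cutE_snd_fan hk hPlt] at heq;
           rw [h1, h2, cutE_fst_fan hk hPlt, cutE_snd_fan hk hPlt] at heq] <;>
          [exact absurd heq.symm (succ_mod_ne hk hPlt); exact absurd heq (succ_mod_ne hk hPlt)]
      rw [if_neg h1, if_neg h2, hF]
      simp only [heq]
      by_cases h : fanN d.toProd.2 = i0 <;> simp [h] <;> decide
    · -- cut edge `i`
      have hic : (d.edge = cutE hk i0) ↔ (i = i0) := by
        rw [hedge, hs]
        exact ⟨fun h => cutE_inj hk hi hi0 h, fun h => by rw [h]⟩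
      have hip : (d.edge = cutE hk P) ↔ ((i+1) % k = i0) := by
        rw [hedge, hs, succ_eq_iff_prev hk hi hi0]
        exact ⟨fun h => cutE_inj hk hi hPlt h, fun h => by rw [h]⟩
      rw [hF]
      rcases hfans with ⟨hf1, hf2⟩ | ⟨hf1, hf2⟩ <;>
        simp only [hf1, hf2, hic, hip] <;>
        by_cases h1 : i = i0 <;> by_cases h2 : (i+1) % k = i0 <;>
        simp [h1, h2] <;>
        first
        | (exfalso; exact succ_mod_ne hk hi0 (by omega))
        | (exfalso; omega)
        | rfl
        | (rw [add_comm])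
  have hsum := tele2 F c
  rw [List.map_congr_left key, sum_map_add] at hsum
  have hne : cutE hk i0 ≠ cutE hk P := fun h => hPne (cutE_inj hk hi0 hPlt h).symm
  have hcount : ∀ e : Sym2 (WV k),
      (c.darts.map fun d => if d.edge = e then (1 : ZMod 2) else 0).sum
        = (c.edges.count e : ZMod 2) := by
    intro e
    have : (c.darts.map fun d => if d.edge = e then (1 : ZMod 2) else 0)
        = (c.edges.map fun x => if x = e then (1 : ZMod 2) else 0) := by
      rw [Walk.edges, List.map_map]; rfl
    rw [this, sum_indicator2]
  rw [hcount, hcount] at hsum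
  rw [zmod2_add_self (F v)] at hsum
  have hc1 : c.edges.count (cutE hk i0) = if cutE hk i0 ∈ c.edges then 1 else 0 := by
    split <;> rename_i h
    · exact List.count_eq_one_of_mem hc h
    · exact List.count_eq_zero_of_not_mem h
  have hc2 : c.edges.count (cutE hk P) = if cutE hk P ∈ c.edges then 1 else 0 := by
    split <;> rename_i h
    · exact List.count_eq_one_of_mem hc h
    · exact List.count_eq_zero_of_not_mem h
  rw [hc1, hc2] at hsum
  have hbad : ((1:ℕ):ZMod 2) + ((0:ℕ):ZMod 2) ≠ 0 := by decide
  have hbad' : ((0:ℕ):ZMod 2) + ((1:ℕ):ZMod 2) ≠ 0 := by decide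
  by_cases h1 : cutE hk i0 ∈ c.edges <;> by_cases h2 : cutE hk P ∈ c.edges
  · simp [h1, h2]
  · exfalso; rw [if_pos h1, if_neg h2] at hsum; exact hbad hsum
  · exfalso; rw [if_neg h1, if_pos h2] at hsum; exact hbad' hsum
  · simp [h1, h2]

lemma card4 {α : Type*} [DecidableEq α] (a b c d : α) : ({a, b, c, d} : Finset α).card ≤ 4 := by
  apply le_trans (Finset.card_insert_le _ _)
  apply Nat.succ_le_succ
  apply le_trans (Finset.card_insert_le _ _)
  apply Nat.succ_le_succ
  apply le_trans (Finset.card_insert_le _ _)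
  apply Nat.succ_le_succ
  simp

lemma cv_eq_iff (hk : 2 ≤ k) {a b : ℕ} : cv hk a = cv hk b ↔ a % (3*k) = b % (3*k) := by
  simp [cv, Fin.ext_iff]

/-- if a walk uses no cut edge, all its vertices lie in one fan -/
lemma fan_const (hk : 2 ≤ k) {u v : WV k} (p : (W k).Walk u v)
    (h : ∀ i < k, cutE hk i ∉ p.edges) : ∀ x ∈ p.support, fanN x = fanN u := by
  induction p with
  | nil =>
    intro x hx
    simp only [Walk.support_nil, List.mem_singleton] at hx
    subst hx; rfl
  | @cons u w v h' q ih =>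
    intro x hx
    have hq : ∀ i < k, cutE hk i ∉ q.edges := by
      intro i hi hmem
      exact h i hi (by rw [Walk.edges_cons]; exact List.mem_cons_of_mem _ hmem)
    have hfu : fanN w = fanN u := by
      rcases classify hk h' with heq | ⟨i, hi, hs, _⟩
      · exact heq.symm
      · exact absurd (by rw [Walk.edges_cons, hs]; exact List.mem_cons_self) (h i hi)
    rw [Walk.support_cons] at hx
    rcases List.mem_cons.mp hx with rfl | hx'
    · rfl
    · rw [ih hq x hx', hfu]

lemma end_mem_tail {V : Type*} {G : SimpleGraph V} {u v : V} (p : G.Walk u v)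
    (h : ¬ p.Nil) : v ∈ p.support.tail := by
  cases p with
  | nil => simp at h
  | cons h' q =>
    rw [Walk.support_cons, List.tail_cons]
    exact Walk.end_mem_support q

lemma mem_support_tail {V : Type*} {G : SimpleGraph V} {v : V} (c : G.Walk v v)
    (hn : ¬ c.Nil) {x : V} (hx : x ∈ c.support) : x ∈ c.support.tail := by
  rw [Walk.support_eq_cons] at hx
  rcases List.mem_cons.mp hx with rfl | hx'
  · exact end_mem_tail c hn
  · exact hx'

lemma sum_map_sub {α : Type*} (l : List α) (f g : α → ℤ) :
    (l.map fun x => f x - g x).sum = (l.map f).sum - (l.map g).sum := by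
  induction l with
  | nil => simp
  | cons a l ih => simp [ih]; ring

/-- in a closed walk, some dart leaves `w0` iff some dart enters `w0` -/
lemma dart_io {v w0 : WV k} (c : (W k).Walk v v) :
    (∃ d ∈ c.darts, d.toProd.1 = w0) ↔ (∃ d ∈ c.darts, d.toProd.2 = w0) := by
  set F : WV k → ℤ := fun x => if x = w0 then 1 else 0 with hF
  have ht := teleZ F c
  rw [sub_self] at ht
  rw [sum_map_sub c.darts (fun d => F d.toProd.2) (fun d => F d.toProd.1), sub_eq_zero] at ht
  have h1 : (c.darts.map fun d => F d.toProd.1).sum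
      = ((c.darts.map fun d => d.toProd.1).map fun x => if x = w0 then (1:ℤ) else 0).sum := by
    rw [List.map_map]; rfl
  have h2 : (c.darts.map fun d => F d.toProd.2).sum
      = ((c.darts.map fun d => d.toProd.2).map fun x => if x = w0 then (1:ℤ) else 0).sum := by
    rw [List.map_map]; rfl
  have key : w0 ∈ c.darts.map (fun d => d.toProd.1) ↔ w0 ∈ c.darts.map (fun d => d.toProd.2) := by
    rw [← sum_indicatorZ_ne_zero, ← sum_indicatorZ_ne_zero, ← h1, ← h2, ht]
  constructor
  · intro ⟨d, hd, hde⟩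
    have := key.mp (List.mem_map.mpr ⟨d, hd, hde⟩)
    obtain ⟨d', hd', hde'⟩ := List.mem_map.mp this
    exact ⟨d', hd', hde'⟩
  · intro ⟨d, hd, hde⟩
    have := key.mpr (List.mem_map.mpr ⟨d, hd, hde⟩)
    obtain ⟨d', hd', hde'⟩ := List.mem_map.mp this
    exact ⟨d', hd', hde'⟩

/-- classification of the neighbours of `v_{3i}` -/
lemma adj_v3i (hk : 2 ≤ k) {i : ℕ} (hi : i < k) {x : WV k}
    (h : (W k).Adj x (Sum.inl (⟨3*i, by omega⟩ : Fin (3*k)))) :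
    x = cv hk (3*i+1) ∨ x = Sum.inr ⟨i, hi⟩ ∨ x = cv hk (3*i + (3*k-1)) := by
  have hpred : (3*i + (3*k-1)) % (3*k) = if i = 0 then 3*k-1 else 3*i - 1 := by
    split <;> rename_i h0
    · subst h0; simpa using Nat.mod_eq_of_lt (by omega : 3*k-1 < 3*k)
    · have : 3*i + (3*k-1) = 3*k + (3*i - 1) := by omega
      rw [this, Nat.add_mod_left, Nat.mod_eq_of_lt (by omega)]
  rw [W_adj] at h
  obtain ⟨hne, hrel | hrel⟩ := h
  · cases x with
    | inl a =>
      have hrel' : (3*i : ℕ) = ((a : ℕ) + 1) % (3*k) := hrel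
      right; right
      have ha := a.isLt
      simp only [cv, Sum.inl.injEq, Fin.ext_iff]
      show (a : ℕ) = (3*i + (3*k-1)) % (3*k)
      by_cases h0 : (a : ℕ) + 1 < 3*k
      · rw [Nat.mod_eq_of_lt h0] at hrel'
        rw [hpred]; split <;> omega
      · have he : (a : ℕ) + 1 = 3*k := by omega
        rw [he, Nat.mod_self] at hrel'
        rw [hpred]; split <;> omega
    | inr j =>
      have hrel' : (3*i : ℕ) = 3*(j : ℕ) ∨ (3*i : ℕ) = 3*(j : ℕ)+1 ∨ (3*i : ℕ) = 3*(j : ℕ)+2 := hrel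
      right; left
      have : (j : ℕ) = i := by omega
      exact congrArg Sum.inr (Fin.ext this)
  · cases x with
    | inl a =>
      have hrel' : (a : ℕ) = (3*i + 1) % (3*k) := hrel
      left
      simp only [cv, Sum.inl.injEq, Fin.ext_iff]
      exact hrel
    | inr j => exact (hrel : False).elim


/-- if a cycle uses the cut edge before fan `i`, it visits a third vertex of fan `i` -/
lemma third_vertex (hk : 2 ≤ k) {i : ℕ} (hi : i < k) {v : WV k} (c : (W k).Walk v v)
    (hc : c.IsCycle) (hprev : cutE hk ((i + (k-1)) % k) ∈ c.edges) :
    ∃ w ∈ c.support, w = Sum.inl (⟨3*i+1, by omega⟩ : Fin (3*k)) ∨ w = Sum.inr ⟨i, hi⟩ := by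
  set P := (i + (k-1)) % k with hPdef
  have hPlt : P < k := prev_lt hk hi
  have hsnd : cv hk (3*P+3) = Sum.inl (⟨3*i, by omega⟩ : Fin (3*k)) := by
    simp only [cv, Sum.inl.injEq, Fin.ext_iff]
    show (3*P+3) % (3*k) = 3*i
    rw [hPdef, prev_formula hk hi]
    split <;> rename_i h0
    · have : 3*(k-1)+3 = 3*k := by omega
      rw [this, Nat.mod_self]; omega
    · rw [Nat.mod_eq_of_lt (by omega)]; omega
  set w0 : WV k := Sum.inl (⟨3*i, by omega⟩ : Fin (3*k)) with hw0
  have hdart : ∃ d ∈ c.darts, d.edge = cutE hk P := by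
    rw [Walk.edges] at hprev
    obtain ⟨d, hd, hde⟩ := List.mem_map.mp hprev
    exact ⟨d, hd, hde⟩
  obtain ⟨d0, hd0, hd0e⟩ := hdart
  have htouch : d0.toProd.1 = w0 ∨ d0.toProd.2 = w0 := by
    have he : s(d0.toProd.1, d0.toProd.2) = s(cv hk (3*P+2), cv hk (3*P+3)) := hd0e
    rw [Sym2.eq_iff] at he
    rcases he with ⟨h1, h2⟩ | ⟨h1, h2⟩
    · right; rw [h2, hsnd]
    · left; rw [h1, hsnd]
  have hin : ∃ d ∈ c.darts, d.toProd.2 = w0 := by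
    rcases htouch with h | h
    · exact (dart_io c).mp ⟨d0, hd0, h⟩
    · exact ⟨d0, hd0, h⟩
  have hout : ∃ d ∈ c.darts, d.toProd.1 = w0 := (dart_io c).mpr hin
  obtain ⟨d1, hd1, h1⟩ := hin
  obtain ⟨d2, hd2, h2⟩ := hout
  have ha : (W k).Adj d1.toProd.1 w0 := by rw [← h1]; exact d1.adj
  have hb : (W k).Adj d2.toProd.2 w0 := by
    have := d2.adj; rw [h2] at this; exact this.symm
  have hnodup : (c.darts.map SimpleGraph.Dart.edge).Nodup := by
    rw [← Walk.edges]; exact hc.isCircuit.isTrail.edges_nodup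
  have hab : d1.toProd.1 ≠ d2.toProd.2 := by
    intro hab
    have hd12 : d1 ≠ d2 := by
      intro h
      subst h
      have hadj := d1.adj
      rw [h1, h2] at hadj
      exact (W k).loopless.irrefl w0 hadj
    apply hd12
    apply List.inj_on_of_nodup_map hnodup hd1 hd2
    show s(d1.toProd.1, d1.toProd.2) = s(d2.toProd.1, d2.toProd.2)
    rw [h1, h2, hab, Sym2.eq_swap]
  rcases adj_v3i hk hi ha with hx | hx | hx
  · exact ⟨d1.toProd.1, Walk.dart_fst_mem_support_of_mem_darts c hd1, Or.inl (by
      rw [hx, cv_eq hk (by omega)])⟩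
  · exact ⟨d1.toProd.1, Walk.dart_fst_mem_support_of_mem_darts c hd1, Or.inr hx⟩
  · rcases adj_v3i hk hi hb with hy | hy | hy
    · exact ⟨d2.toProd.2, Walk.dart_snd_mem_support_of_mem_darts c hd2, Or.inl (by
        rw [hy, cv_eq hk (by omega)])⟩
    · exact ⟨d2.toProd.2, Walk.dart_snd_mem_support_of_mem_darts c hd2, Or.inr hy⟩
    · exact absurd (hx.trans hy.symm) hab

/-- if a trail closed walk uses one cut edge, it uses all of them -/
lemma all_cuts (hk : 2 ≤ k) {v : WV k} {c : (W k).Walk v v} (hc : c.edges.Nodup)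
    {j : ℕ} (hj : j < k) (hmem : cutE hk j ∈ c.edges) :
    ∀ i < k, cutE hk i ∈ c.edges := by
  have step : ∀ i, i < k → cutE hk i ∈ c.edges → cutE hk ((i+1) % k) ∈ c.edges := by
    intro i hi h
    have h2 : (i+1) % k < k := Nat.mod_lt _ (by omega)
    have hp : (((i+1) % k) + (k-1)) % k = i := by
      rw [Nat.mod_add_mod, show i+1+(k-1) = i + k by omega, Nat.add_mod_right,
        Nat.mod_eq_of_lt hi]
    exact (cut_step hk hc h2).mp (by rwa [hp])
  have main : ∀ n, cutE hk ((j + n) % k) ∈ c.edges := by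
    intro n
    induction n with
    | zero => simpa [Nat.mod_eq_of_lt hj] using hmem
    | succ n ih =>
      have := step _ (Nat.mod_lt _ (by omega)) ih
      rwa [Nat.mod_add_mod, show j + n + 1 = j + (n+1) by omega] at this
  intro i hi
  have := main (k - j + i)
  rwa [show j + (k - j + i) = i + k by omega, Nat.add_mod_right, Nat.mod_eq_of_lt hi] at this

lemma cv_adj (hk : 2 ≤ k) (n : ℕ) : (W k).Adj (cv hk n) (cv hk (n+1)) := by
  rw [W_adj]
  constructor
  · intro h
    rw [cv_eq_iff hk] at h
    have hd := (Nat.modEq_iff_dvd' (by omega : n ≤ n+1)).mp h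
    rw [Nat.add_sub_cancel_left] at hd
    have := Nat.le_of_dvd one_pos hd
    omega
  · left
    show ((n+1) % (3*k) : ℕ) = (n % (3*k) + 1) % (3*k)
    rw [Nat.mod_add_mod]

/-- the outer path `v₀ v₁ … vₙ` -/
def pathW (hk : 2 ≤ k) : (n : ℕ) → (W k).Walk (cv hk 0) (cv hk n)
  | 0 => Walk.nil
  | n+1 => (pathW hk n).concat (cv_adj hk n)

lemma pathW_length (hk : 2 ≤ k) (n : ℕ) : (pathW hk n).length = n := by
  induction n with
  | zero => rfl
  | succ n ih => rw [pathW, Walk.length_concat, ih]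

lemma pathW_support (hk : 2 ≤ k) (n : ℕ) :
    (pathW hk n).support = (List.range (n+1)).map (cv hk) := by
  induction n with
  | zero => rfl
  | succ n ih =>
    rw [pathW, Walk.support_concat, ih, List.range_succ (n := n+1), List.map_append]
    simp

lemma pathW_edges (hk : 2 ≤ k) (n : ℕ) :
    (pathW hk n).edges = (List.range n).map (fun j => s(cv hk j, cv hk (j+1))) := by
  induction n with
  | zero => rfl
  | succ n ih =>
    rw [pathW, Walk.edges_concat, ih, List.range_succ (n := n), List.map_append]
    simp

lemma cv_3k (hk : 2 ≤ k) : cv hk (3*k) = cv hk 0 := by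
  rw [cv_eq_iff hk, Nat.mod_self, Nat.zero_mod]

/-- the big outer cycle -/
def bigCycle (hk : 2 ≤ k) : (W k).Walk (cv hk 0) (cv hk 0) :=
  (pathW hk (3*k)).copy rfl (cv_3k hk)

lemma bigCycle_length (hk : 2 ≤ k) : (bigCycle hk).length = 3*k := by
  rw [bigCycle, Walk.length_copy, pathW_length]

lemma bigCycle_isCycle (hk : 2 ≤ k) : (bigCycle hk).IsCycle := by
  have hmod : ∀ m : ℕ, m < 3*k → m % (3*k) = m := fun m hm => Nat.mod_eq_of_lt hm
  refine ⟨⟨⟨?_⟩, ?_⟩, ?_⟩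
  · -- edges nodup
    rw [bigCycle, Walk.edges_copy, pathW_edges]
    refine List.Nodup.map_on ?_ List.nodup_range
    intro x hx y hy hxy
    rw [List.mem_range] at hx hy
    rw [Sym2.eq_iff] at hxy
    have e1 : (x+1) % (3*k) = if x+1 < 3*k then x+1 else 0 := by
      split <;> rename_i h'
      · exact Nat.mod_eq_of_lt h'
      · have : x+1 = 3*k := by omega
        rw [this, Nat.mod_self]
    have e2 : (y+1) % (3*k) = if y+1 < 3*k then y+1 else 0 := by
      split <;> rename_i h'
      · exact Nat.mod_eq_of_lt h'
      · have : y+1 = 3*k := by omega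
        rw [this, Nat.mod_self]
    rcases hxy with ⟨h1, h2⟩ | ⟨h1, h2⟩ <;>
      rw [cv_eq_iff hk] at h1 h2 <;>
      simp only [hmod x hx, hmod y hy] at h1 h2 <;>
      split at e1 <;> split at e2 <;> omega
  · -- ne nil
    intro h
    have : (bigCycle hk).length = 0 := by rw [h]; rfl
    rw [bigCycle_length hk] at this
    omega
  · -- support tail nodup
    have hsupp : (bigCycle hk).support.tail
        = (List.range (3*k)).map (fun j => cv hk (j+1)) := by
      rw [bigCycle, Walk.support_copy, pathW_support, List.range_succ_eq_map,
        List.map_cons, List.tail_cons, List.map_map]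
      rfl
    rw [hsupp]
    refine List.Nodup.map_on ?_ List.nodup_range
    intro x hx y hy hxy
    rw [List.mem_range] at hx hy
    rw [cv_eq_iff hk] at hxy
    have e1 : (x+1) % (3*k) = if x+1 < 3*k then x+1 else 0 := by
      split <;> rename_i h'
      · exact Nat.mod_eq_of_lt h'
      · have : x+1 = 3*k := by omega
        rw [this, Nat.mod_self]
    have e2 : (y+1) % (3*k) = if y+1 < 3*k then y+1 else 0 := by
      split <;> rename_i h'
      · exact Nat.mod_eq_of_lt h'
      · have : y+1 = 3*k := by omega
        rw [this, Nat.mod_self]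
    split at e1 <;> split at e2 <;> omega


end WAux

/-- For every integer `k ≥ 2`, the graph `W k` has no cycle of length `ℓ` with
`5 ≤ ℓ ≤ 3k - 1`, while it has a cycle of length `3k`; consequently, for all `a, b`
with `5 ≤ a ≤ b ≤ 3k - 1`, `W k` has no cycle whose length lies in `[a, b]` but
has a cycle longer than `b`. -/
theorem stmt_1 (k : ℕ) (hk : 2 ≤ k) :
    (∀ (v : WV k) (c : (W k).Walk v v), c.IsCycle →
      ¬ (5 ≤ c.length ∧ c.length ≤ 3*k - 1)) ∧
    (∃ (v : WV k) (c : (W k).Walk v v), c.IsCycle ∧ c.length = 3*k) ∧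
    (∀ a b : ℕ, 5 ≤ a → a ≤ b → b ≤ 3*k - 1 →
      (∀ (v : WV k) (c : (W k).Walk v v), c.IsCycle →
        ¬ (a ≤ c.length ∧ c.length ≤ b)) ∧
      (∃ (v : WV k) (c : (W k).Walk v v), c.IsCycle ∧ b < c.length)) := by
  classical
  open WAux SimpleGraph in
  have part1 : ∀ (v : WV k) (c : (W k).Walk v v), c.IsCycle →
      ¬ (5 ≤ c.length ∧ c.length ≤ 3*k - 1) := by
    rintro v c hc ⟨h5, hub⟩
    have hnodup := hc.isCircuit.isTrail.edges_nodup
    have hnil : ¬ c.Nil := hc.not_nil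
    have hlentail : c.support.tail.length = c.length := by
      have := Walk.length_support c
      have := List.length_tail (l := c.support)
      omega
    by_cases hcut : ∃ j, j < k ∧ cutE hk j ∈ c.edges
    · -- the cycle uses some cut edge, hence all of them, hence is long
      obtain ⟨j, hj, hjm⟩ := hcut
      have hall := all_cuts hk hnodup hj hjm
      have hsnd : ∀ i : ℕ, (hi : i < k) →
          cv hk (3*((i + (k-1)) % k)+3) = Sum.inl (⟨3*i, by omega⟩ : Fin (3*k)) := by
        intro i hi
        simp only [cv, Sum.inl.injEq, Fin.ext_iff]
        show (3*((i + (k-1)) % k)+3) % (3*k) = 3*i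
        rw [prev_formula hk hi]
        split <;> rename_i h0
        · have h33 : 3*(k-1)+3 = 3*k := by omega
          rw [h33, Nat.mod_self]; omega
        · rw [Nat.mod_eq_of_lt (by omega)]; omega
      have hA : ∀ i : Fin k,
          (Sum.inl (⟨3*(i:ℕ), by have := i.isLt; omega⟩ : Fin (3*k)) : WV k)
            ∈ c.support.tail := by
        intro i
        have hi := i.isLt
        have hPlt := prev_lt hk hi
        have hm := hall _ hPlt
        rw [cutE] at hm
        have hmem := Walk.snd_mem_support_of_mem_edges c hm
        rw [hsnd (i:ℕ) hi] at hmem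
        exact mem_support_tail c hnil hmem
      have hB : ∀ i : Fin k,
          (Sum.inl (⟨3*(i:ℕ)+2, by have := i.isLt; omega⟩ : Fin (3*k)) : WV k)
            ∈ c.support.tail := by
        intro i
        have hi := i.isLt
        have hm := hall _ hi
        rw [cutE] at hm
        have hmem := Walk.fst_mem_support_of_mem_edges c hm
        rw [cv_eq hk (by omega : 3*(i:ℕ)+2 < 3*k)] at hmem
        exact mem_support_tail c hnil hmem
      have hC : ∀ i : Fin k, ∃ w, w ∈ c.support.tail ∧
          (w = (Sum.inl (⟨3*(i:ℕ)+1, by have := i.isLt; omega⟩ : Fin (3*k)) : WV k)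
            ∨ w = Sum.inr i) := by
        intro i
        have hi := i.isLt
        have hPlt := prev_lt hk hi
        obtain ⟨w, hwmem, hweq⟩ := third_vertex hk hi c hc (hall _ hPlt)
        exact ⟨w, mem_support_tail c hnil hwmem, hweq⟩
      choose wf hwmem hweq using hC
      set g : Fin k × Fin 3 → WV k := fun p =>
        if (p.2 : ℕ) = 0 then
          Sum.inl (⟨3*(p.1:ℕ), by have := p.1.isLt; omega⟩ : Fin (3*k))
        else if (p.2 : ℕ) = 1 then
          Sum.inl (⟨3*(p.1:ℕ)+2, by have := p.1.isLt; omega⟩ : Fin (3*k))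
        else wf p.1 with hg
      have hgval : ∀ i : Fin k,
          g (i, 0) = Sum.inl (⟨3*(i:ℕ), by have := i.isLt; omega⟩ : Fin (3*k)) ∧
          g (i, 1) = Sum.inl (⟨3*(i:ℕ)+2, by have := i.isLt; omega⟩ : Fin (3*k)) ∧
          g (i, 2) = wf i := by
        intro i
        refine ⟨rfl, rfl, rfl⟩
      have hwf : ∀ i : Fin k, (wf i = (Sum.inl (⟨3*(i:ℕ)+1, by have := i.isLt; omega⟩ :
          Fin (3*k)) : WV k)) ∨ wf i = Sum.inr i := hweq
      have hginj : Function.Injective g := by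
        rintro ⟨i, t⟩ ⟨j, s⟩ h
        have hi := i.isLt
        have hj := j.isLt
        simp only [hg] at h
        fin_cases t <;> fin_cases s <;> norm_num at h ⊢
        all_goals try (rcases hwf i with hwi | hwi <;> rw [hwi] at h)
        all_goals try (rcases hwf j with hwj | hwj <;> rw [hwj] at h)
        all_goals try simp only [Sum.inl.injEq, Sum.inr.injEq, Fin.ext_iff] at h
        all_goals first
          | exact h
          | exact Fin.ext (by omega)
          | (exfalso; omega)
          | (exfalso; exact absurd h (by simp))
      have hsubT : Finset.image g Finset.univ ⊆ c.support.tail.toFinset := by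
        intro x hx
        rw [Finset.mem_image] at hx
        obtain ⟨⟨i, t⟩, _, rfl⟩ := hx
        rw [List.mem_toFinset]
        fin_cases t
        · exact (hgval i).1 ▸ hA i
        · exact (hgval i).2.1 ▸ hB i
        · exact (hgval i).2.2 ▸ hwmem i
      have hcard1 : (Finset.image g Finset.univ).card = k * 3 := by
        rw [Finset.card_image_of_injective _ hginj, Finset.card_univ]
        simp
      have hcard2 := Finset.card_le_card hsubT
      have hcard3 : c.support.tail.toFinset.card = c.length := by
        rw [List.toFinset_card_of_nodup hc.support_nodup, hlentail]
      omega
    · -- the cycle avoids all cut edges, hence lies in one fan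
      push_neg at hcut
      have hconst := fan_const hk c (fun i hi => hcut i hi)
      have hflt : fanN v < k := fanN_lt hk v
      set f := fanN v with hf
      set S : Finset (WV k) :=
        {Sum.inl (⟨3*f, by omega⟩ : Fin (3*k)), Sum.inl (⟨3*f+1, by omega⟩ : Fin (3*k)),
         Sum.inl (⟨3*f+2, by omega⟩ : Fin (3*k)), Sum.inr (⟨f, hflt⟩ : Fin k)} with hS
      have hsub : ∀ x ∈ c.support.tail, x ∈ S := by
        intro x hx
        have hxs : x ∈ c.support := List.mem_of_mem_tail hx
        have hfx : fanN x = f := hconst x hxs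
        cases x with
        | inl a =>
          have hfa : (a : ℕ)/3 = f := hfx
          have ha := a.isLt
          have : (a : ℕ) = 3*f ∨ (a : ℕ) = 3*f+1 ∨ (a : ℕ) = 3*f+2 := by omega
          rcases this with h | h | h <;>
            simp [hS, Sum.inl.injEq, Fin.ext_iff, h]
        | inr b =>
          have hfb : (b : ℕ) = f := hfx
          simp [hS, Sum.inr.injEq, Fin.ext_iff, hfb]
      have hScard : S.card ≤ 4 := by
        rw [hS]
        exact card4 _ _ _ _
      have hsub' : c.support.tail.toFinset ⊆ S := by
        intro x hx
        exact hsub x (List.mem_toFinset.mp hx)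
      have hcard2 := Finset.card_le_card hsub'
      have hcard3 : c.support.tail.toFinset.card = c.length := by
        rw [List.toFinset_card_of_nodup hc.support_nodup, hlentail]
      omega
  have part2 : ∃ (v : WV k) (c : (W k).Walk v v), c.IsCycle ∧ c.length = 3*k :=
    ⟨_, WAux.bigCycle hk, WAux.bigCycle_isCycle hk, WAux.bigCycle_length hk⟩
  refine ⟨part1, part2, ?_⟩
  intro a b ha hab hb
  constructor
  · rintro v c hcyc ⟨h1, h2⟩
    exact part1 v c hcyc ⟨by omega, by omega⟩
  · obtain ⟨v, c, hcyc, hl⟩ := part2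
    exact ⟨v, c, hcyc, by omega⟩
end

section
/- For every integer k ≥ 2, the set of lengths of cycles of W_k is exactly {3, 4} ∪ {3k, 3k+1, …, 4k}. -/
open SimpleGraph

namespace CycAux

variable {V : Type*} {G : SimpleGraph V}

/-- Walk along a sequence of pairwise-adjacent vertices. -/
def chain (G : SimpleGraph V) : (m : ℕ) → (g : ℕ → V) →
    (∀ t < m, G.Adj (g t) (g (t+1))) → G.Walk (g 0) (g m)
  | 0, _, _ => .nil
  | (m+1), g, h => .cons (h 0 (Nat.succ_pos m)) <|
      chain G m (fun t => g (t+1)) (fun t ht => h (t+1) (by omega))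

@[simp] lemma chain_length (m : ℕ) (g : ℕ → V) (h) : (chain G m g h).length = m := by
  induction m generalizing g with
  | zero => rfl
  | succ m ih => simp [chain, ih]

lemma chain_support (m : ℕ) (g : ℕ → V) (h) :
    (chain G m g h).support = (List.range (m+1)).map g := by
  induction m generalizing g with
  | zero => rfl
  | succ m ih =>
      rw [show (m+1+1) = (m+1)+1 from rfl, List.range_succ_eq_map (n := m+1)]
      simp only [chain, Walk.support_cons, ih, List.map_cons, List.map_map]
      rfl

lemma chain_edges (m : ℕ) (g : ℕ → V) (h) :
    (chain G m g h).edges = (List.range m).map (fun t => s(g t, g (t+1))) := by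
  induction m generalizing g with
  | zero => rfl
  | succ m ih =>
      rw [List.range_succ_eq_map (n := m)]
      simp only [chain, Walk.edges_cons, ih, List.map_cons, List.map_map]
      rfl

/-- From a closed, injective, adjacent sequence, get a cycle. -/
lemma exists_cycle (n : ℕ) (hn : 3 ≤ n) (g : ℕ → V)
    (hadj : ∀ t < n, G.Adj (g t) (g (t+1))) (hclose : g n = g 0)
    (hinj : ∀ s t, s < t → t < n → g s ≠ g t) :
    ∃ (v : V) (c : G.Walk v v), c.IsCycle ∧ c.length = n := by
  have key : ∀ s t, s ≤ n → t ≤ n → g s = g t →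
      (s = t ∨ (s = 0 ∧ t = n) ∨ (s = n ∧ t = 0)) := by
    intro s t hs ht heq
    rcases Nat.eq_or_lt_of_le hs with rfl | hs'
    · rcases Nat.eq_or_lt_of_le ht with rfl | ht'
      · exact Or.inl rfl
      · rw [hclose] at heq
        rcases Nat.eq_zero_or_pos t with rfl | htp
        · exact Or.inr (Or.inr ⟨rfl, rfl⟩)
        · exact absurd heq (hinj 0 t htp ht')
    · rcases Nat.eq_or_lt_of_le ht with rfl | ht'
      · rw [hclose] at heq
        rcases Nat.eq_zero_or_pos s with rfl | hsp
        · exact Or.inr (Or.inl ⟨rfl, rfl⟩)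
        · exact absurd heq.symm (hinj 0 s hsp hs')
      · rcases Nat.lt_trichotomy s t with h | h | h
        · exact absurd heq (hinj s t h ht')
        · exact Or.inl h
        · exact absurd heq.symm (hinj t s h hs')
  have hinj' : ∀ s t, 1 ≤ s → s < t → t ≤ n → g s ≠ g t := by
    intro s t h1 hst htn heq
    rcases key s t (by omega) htn heq with h | h | h <;> omega
  refine ⟨g 0, (chain G n g hadj).copy rfl hclose, ?_, by simp⟩
  rw [Walk.isCycle_def]
  refine ⟨?_, ?_, ?_⟩
  · -- trail
    rw [Walk.isTrail_def, Walk.edges_copy, chain_edges]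
    refine List.Nodup.map_on ?_ (List.nodup_range (n := n))
    intro s hs t ht heq
    simp only [List.mem_range] at hs ht
    rw [Sym2.eq_iff] at heq
    rcases heq with ⟨h1, h2⟩ | ⟨h1, h2⟩
    · rcases key s t (by omega) (by omega) h1 with h | h | h <;> omega
    · rcases key s (t+1) (by omega) (by omega) h1 with h | h | h <;>
        rcases key (s+1) t (by omega) (by omega) h2 with h' | h' | h' <;> omega
  · -- not nil
    intro hnil
    have := congrArg Walk.length hnil
    rw [Walk.length_copy, chain_length, Walk.length_nil] at this
    omega
  · rw [Walk.support_copy, chain_support, List.range_succ_eq_map,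
      List.map_cons, List.tail_cons, List.map_map]
    refine List.Nodup.map_on ?_ (List.nodup_range (n := n))
    intro s hs t ht heq
    simp only [List.mem_range] at hs ht
    have : g (s+1) = g (t+1) := heq
    rcases key (s+1) (t+1) (by omega) (by omega) this with h | h | h <;> omega

/-- support as map of getVert. -/
lemma support_eq_map {u v : V} (w : G.Walk u v) :
    w.support = (List.range (w.length+1)).map w.getVert := by
  induction w with
  | nil => rfl
  | @cons a b c h p ih =>
      rw [Walk.support_cons, ih, Walk.length_cons, List.range_succ_eq_map (n := p.length + 1),
        List.map_cons, List.map_map]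
      congr 1

lemma cycle_getVert_ne {v : V} {c : G.Walk v v} (hc : c.IsCycle) :
    ∀ s t, 1 ≤ s → s < t → t ≤ c.length → c.getVert s ≠ c.getVert t := by
  have hnd := hc.support_nodup
  rw [support_eq_map, List.range_succ_eq_map, List.map_cons, List.tail_cons,
    List.map_map] at hnd
  intro s t h1 hst htl heq
  have hmem1 : s - 1 ∈ List.range c.length := by rw [List.mem_range]; omega
  have hmem2 : t - 1 ∈ List.range c.length := by rw [List.mem_range]; omega
  have h2 : (c.getVert ∘ Nat.succ) (s - 1) = (c.getVert ∘ Nat.succ) (t - 1) := by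
    show c.getVert (s - 1 + 1) = c.getVert (t - 1 + 1)
    rw [show s - 1 + 1 = s by omega, show t - 1 + 1 = t by omega]
    exact heq
  have := List.inj_on_of_nodup_map hnd hmem1 hmem2 h2
  omega

/-- Discrete intermediate value theorem (ascending). -/
lemma ivt (P : ℕ → ℤ) (c : ℤ) : ∀ (n a : ℕ), (∀ t, a ≤ t → t < a+n → P (t+1) ≤ P t + 1) →
    P a ≤ c → c ≤ P (a+n) → ∃ s, a ≤ s ∧ s ≤ a+n ∧ P s = c := by
  intro n
  induction n with
  | zero =>
      intro a _ h1 h2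
      rw [Nat.add_zero] at h2
      exact ⟨a, le_refl a, by omega, le_antisymm h1 h2⟩
  | succ n ih =>
      intro a hstep h1 h2
      rcases eq_or_lt_of_le h1 with h | h
      · exact ⟨a, le_refl a, by omega, h⟩
      · have hs : P (a+1) ≤ P a + 1 := hstep a (le_refl a) (by omega)
        rw [show a + (n+1) = (a+1) + n by omega] at h2
        obtain ⟨s, hs1, hs2, hs3⟩ := ih (a+1)
          (fun t ht1 ht2 => hstep t (by omega) (by omega)) (by omega) h2
        exact ⟨s, by omega, by omega, hs3⟩

/-- Double hit lemma: a closed slope-≤1 sequence takes each strictly intermediate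
value at two distinct times in `[1, ℓ]`. -/
lemma double_hit (R : ℕ → ℤ) (ℓ : ℕ)
    (hstep : ∀ t < ℓ, |R (t+1) - R t| ≤ 1) (hclose : R ℓ = R 0)
    (a b : ℕ) (ha : a ≤ ℓ) (hb : b ≤ ℓ) (c : ℤ) (hca : R a < c) (hcb : c < R b) :
    ∃ s t, 1 ≤ s ∧ s ≤ ℓ ∧ 1 ≤ t ∧ t ≤ ℓ ∧ s ≠ t ∧ R s = c ∧ R t = c := by
  have hl1 : 1 ≤ ℓ := by
    by_contra h
    have ha0 : a = 0 := by omega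
    have hb0 : b = 0 := by omega
    rw [ha0] at hca; rw [hb0] at hcb; omega
  set R' : ℕ → ℤ := fun t => if t ≤ ℓ then R t else R (t - ℓ) with hR'
  have hup : ∀ t ≤ ℓ, R' t = R t := fun t ht => by simp [hR', ht]
  have hdown : ∀ t, ℓ < t → R' t = R (t - ℓ) := by
    intro t h1; simp [hR', Nat.not_le.mpr h1]
  have hwrap : ∀ x ≤ ℓ, R' (x + ℓ) = R x := by
    intro x hx
    rcases Nat.eq_zero_or_pos x with rfl | hx0
    · rw [Nat.zero_add, hup ℓ (le_refl ℓ), hclose]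
    · rw [hdown (x + ℓ) (by omega), show x + ℓ - ℓ = x by omega]
  have hR'step : ∀ t < 2*ℓ, |R' (t+1) - R' t| ≤ 1 := by
    intro t ht
    by_cases h1 : t + 1 ≤ ℓ
    · rw [hup (t+1) h1, hup t (by omega)]
      exact hstep t (by omega)
    · by_cases h2 : t = ℓ
      · rw [h2, hdown (ℓ+1) (by omega), show ℓ + 1 - ℓ = 1 by omega, hup ℓ (le_refl ℓ), hclose]
        exact hstep 0 (by omega)
      · rw [hdown (t+1) (by omega), hdown t (by omega), show t + 1 - ℓ = (t - ℓ) + 1 by omega]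
        exact hstep (t - ℓ) (by omega)
  have hstepup : ∀ t, t < 2*ℓ → R' (t+1) ≤ R' t + 1 := by
    intro t ht; have := hR'step t ht; rw [abs_le] at this; omega
  have hstepdown : ∀ t, t < 2*ℓ → (-R') (t+1) ≤ (-R') t + 1 := by
    intro t ht; have := hR'step t ht; rw [abs_le] at this
    simp only [Pi.neg_apply]; omega
  rcases Nat.lt_trichotomy a b with hab | hab | hab
  · -- ascent on [a,b], descent on [b, a+ℓ]
    obtain ⟨s, hs1, hs2, hs3⟩ := ivt R' c (b - a) a
      (fun t ht1 ht2 => hstepup t (by omega))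
      (by rw [hup a ha]; omega)
      (by rw [show a + (b - a) = b by omega, hup b hb]; omega)
    have hs2' : s ≤ b := by omega
    rw [hup s (by omega)] at hs3
    obtain ⟨t, ht1, ht2, ht3⟩ := ivt (-R') (-c) (a + ℓ - b) b
      (fun t ht1 ht2 => hstepdown t (by omega))
      (by simp only [Pi.neg_apply]; rw [hup b hb]; omega)
      (by simp only [Pi.neg_apply]
          rw [show b + (a + ℓ - b) = a + ℓ by omega, hwrap a ha]; omega)
    have ht2' : t ≤ a + ℓ := by omega
    simp only [Pi.neg_apply, neg_le_neg_iff] at ht3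
    have ht3' : R' t = c := by omega
    have hsa : a < s := by
      rcases Nat.eq_or_lt_of_le hs1 with h | h
      · exfalso; rw [← h] at hs3; omega
      · exact h
    have hsb : s < b := by
      rcases Nat.eq_or_lt_of_le hs2' with h | h
      · exfalso; rw [h] at hs3; omega
      · exact h
    have htb : b < t := by
      rcases Nat.eq_or_lt_of_le ht1 with h | h
      · exfalso; rw [← h, hup b hb] at ht3'; omega
      · exact h
    have hta : t < a + ℓ := by
      rcases Nat.eq_or_lt_of_le ht2' with h | h
      · exfalso; rw [h, hwrap a ha] at ht3'; omega
      · exact h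
    by_cases hte : t ≤ ℓ
    · rw [hup t hte] at ht3'
      exact ⟨s, t, by omega, by omega, by omega, hte, by omega, hs3, ht3'⟩
    · rw [hdown t (by omega)] at ht3'
      exact ⟨s, t - ℓ, by omega, by omega, by omega, by omega, by omega, hs3, ht3'⟩
  · exfalso; rw [hab] at hca; omega
  · -- descent on [b,a], ascent on [a, b+ℓ]
    obtain ⟨s, hs1, hs2, hs3⟩ := ivt (-R') (-c) (a - b) b
      (fun t ht1 ht2 => hstepdown t (by omega))
      (by simp only [Pi.neg_apply]; rw [hup b hb]; omega)
      (by simp only [Pi.neg_apply]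
          rw [show b + (a - b) = a by omega, hup a ha]; omega)
    have hs2' : s ≤ a := by omega
    simp only [Pi.neg_apply, neg_le_neg_iff] at hs3
    have hs3' : R' s = c := by omega
    rw [hup s (by omega)] at hs3'
    obtain ⟨t, ht1, ht2, ht3⟩ := ivt R' c (b + ℓ - a) a
      (fun t ht1 ht2 => hstepup t (by omega))
      (by rw [hup a ha]; omega)
      (by rw [show a + (b + ℓ - a) = b + ℓ by omega, hwrap b hb]; omega)
    have ht2' : t ≤ b + ℓ := by omega
    have hsb : b < s := by
      rcases Nat.eq_or_lt_of_le hs1 with h | h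
      · exfalso; rw [← h] at hs3'; omega
      · exact h
    have hsa : s < a := by
      rcases Nat.eq_or_lt_of_le hs2' with h | h
      · exfalso; rw [h] at hs3'; omega
      · exact h
    have hta : a < t := by
      rcases Nat.eq_or_lt_of_le ht1 with h | h
      · exfalso; rw [← h, hup a ha] at ht3; omega
      · exact h
    have htb : t < b + ℓ := by
      rcases Nat.eq_or_lt_of_le ht2' with h | h
      · exfalso; rw [h, hwrap b hb] at ht3; omega
      · exact h
    by_cases hte : t ≤ ℓ
    · rw [hup t hte] at ht3
      exact ⟨s, t, by omega, by omega, by omega, hte, by omega, hs3', ht3⟩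
    · rw [hdown t (by omega)] at ht3
      exact ⟨s, t - ℓ, by omega, by omega, by omega, by omega, by omega, hs3', ht3⟩

end CycAux

namespace WAux

open SimpleGraph

/-- integer coordinate -/
def fc (k : ℕ) : WV k → ℤ
  | Sum.inl i => (i : ℤ)
  | Sum.inr a => 3*(a : ℤ)+1

/-- step displacement -/
def dst (k : ℕ) : WV k → WV k → ℤ
  | Sum.inl i, Sum.inl j => if (j:ℕ) = ((i:ℕ)+1) % (3*k) then 1 else -1
  | Sum.inl i, Sum.inr a => (3*(a:ℤ)+1) - (i:ℤ)
  | Sum.inr a, Sum.inl j => (j:ℤ) - (3*(a:ℤ)+1)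
  | Sum.inr _, Sum.inr _ => 0

lemma fc_nonneg (k : ℕ) (x : WV k) : 0 ≤ fc k x := by
  cases x with
  | inl i => simp [fc]
  | inr a => have : (0:ℤ) ≤ (a:ℤ) := by positivity
             simp [fc]; omega

lemma fc_lt (k : ℕ) (hk : 1 ≤ k) (x : WV k) : fc k x < 3*k := by
  cases x with
  | inl i => have := i.isLt; simp [fc]; omega
  | inr a => have := a.isLt; simp [fc]; omega

lemma fc_eq_of_ne {k : ℕ} {x y : WV k} (hne : x ≠ y) (heq : fc k x = fc k y) :
    fc k x % 3 = 1 := by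
  cases x with
  | inl i =>
      cases y with
      | inl j =>
          exfalso; apply hne
          simp only [fc] at heq
          have : (i:ℕ) = (j:ℕ) := by omega
          congr 1; exact Fin.ext this
      | inr a => simp only [fc] at heq ⊢; omega
  | inr a =>
      cases y with
      | inl j => simp only [fc] at heq ⊢; omega
      | inr b =>
          exfalso; apply hne
          simp only [fc] at heq
          have : (a:ℕ) = (b:ℕ) := by omega
          congr 1; exact Fin.ext this

lemma fc_no_three {k : ℕ} {x y z : WV k} (hxy : x ≠ y) (hyz : y ≠ z) (hxz : x ≠ z)
    (e1 : fc k x = fc k y) (e2 : fc k y = fc k z) : False := by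
  have inl_inj : ∀ (i j : Fin (3*k)), fc k (Sum.inl i) = fc k (Sum.inl j) →
      (Sum.inl i : WV k) = Sum.inl j := by
    intro i j h; simp only [fc] at h
    congr 1; exact Fin.ext (by omega)
  have inr_inj : ∀ (a b : Fin k), fc k (Sum.inr a) = fc k (Sum.inr b) →
      (Sum.inr a : WV k) = Sum.inr b := by
    intro a b h; simp only [fc] at h
    congr 1; exact Fin.ext (by omega)
  cases x with
  | inl i =>
      cases y with
      | inl j => exact hxy (inl_inj _ _ e1)
      | inr a =>
          cases z with
          | inl j' => exact hxz (inl_inj _ _ (e1.trans e2))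
          | inr b => exact hyz (inr_inj _ _ e2)
  | inr a =>
      cases y with
      | inl j =>
          cases z with
          | inl j' => exact hyz (inl_inj _ _ e2)
          | inr b => exact hxz (inr_inj _ _ (e1.trans e2))
      | inr b => exact hxy (inr_inj _ _ e1)

lemma step_bound {k : ℕ} (hk : 2 ≤ k) {x y : WV k} (h : (W k).Adj x y) :
    |dst k x y| ≤ 1 ∧ (3*(k:ℤ)) ∣ (fc k y - fc k x - dst k x y) := by
  rw [W, SimpleGraph.fromRel_adj] at h
  obtain ⟨hne, hrel⟩ := h
  cases x with
  | inl i =>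
      cases y with
      | inl j =>
          by_cases hc : (j:ℕ) = ((i:ℕ)+1) % (3*k)
          · constructor
            · simp [dst, hc]
            · simp only [dst, if_pos hc, fc]
              have hcast : (j:ℤ) = ((i:ℤ)+1) % (3*(k:ℤ)) := by
                exact_mod_cast hc
              have := Int.emod_emod_of_dvd ((i:ℤ)+1) (dvd_refl (3*(k:ℤ)))
              have hmod : (j:ℤ) % (3*(k:ℤ)) = ((i:ℤ)+1) % (3*(k:ℤ)) := by
                rw [hcast]; exact this
              have hd := Int.ModEq.dvd (hmod : Int.ModEq (3*(k:ℤ)) (j:ℤ) ((i:ℤ)+1))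
              have : (i:ℤ) + 1 - (j:ℤ) = -((j:ℤ) - (i:ℤ) - 1) := by ring
              rw [this] at hd
              exact (dvd_neg.mp hd)
          · have hc2 : (i:ℕ) = ((j:ℕ)+1) % (3*k) := by
              rcases hrel with h | h
              · exact absurd h hc
              · exact h
            constructor
            · simp [dst, hc]
            · simp only [dst, if_neg hc, fc]
              have hcast : (i:ℤ) = ((j:ℤ)+1) % (3*(k:ℤ)) := by
                exact_mod_cast hc2
              have := Int.emod_emod_of_dvd ((j:ℤ)+1) (dvd_refl (3*(k:ℤ)))
              have hmod : (i:ℤ) % (3*(k:ℤ)) = ((j:ℤ)+1) % (3*(k:ℤ)) := by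
                rw [hcast]; exact this
              have hd := Int.ModEq.dvd (hmod : Int.ModEq (3*(k:ℤ)) (i:ℤ) ((j:ℤ)+1))
              have : (j:ℤ) + 1 - (i:ℤ) = (j:ℤ) - (i:ℤ) - -1 := by ring
              rw [this] at hd
              exact hd
      | inr a =>
          have hrel' : (i:ℕ) = 3*(a:ℕ) ∨ (i:ℕ) = 3*(a:ℕ)+1 ∨ (i:ℕ) = 3*(a:ℕ)+2 := by
            rcases hrel with h | h
            · exact absurd h (by simp [WRel])
            · exact h
          constructor
          · simp only [dst]
            rw [abs_le]
            rcases hrel' with h | h | h <;>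
              (have : (i:ℤ) = 3*(a:ℤ) ∨ (i:ℤ) = 3*(a:ℤ)+1 ∨ (i:ℤ) = 3*(a:ℤ)+2 := by
                 push_cast [h]; omega
               omega)
          · have : fc k (Sum.inr a) - fc k (Sum.inl i) - dst k (Sum.inl i) (Sum.inr a) = 0 := by
              simp only [fc, dst]; ring
            rw [this]; exact dvd_zero _
  | inr a =>
      cases y with
      | inl j =>
          have hrel' : (j:ℕ) = 3*(a:ℕ) ∨ (j:ℕ) = 3*(a:ℕ)+1 ∨ (j:ℕ) = 3*(a:ℕ)+2 := by
            rcases hrel with h | h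
            · exact h
            · exact absurd h (by simp [WRel])
          constructor
          · simp only [dst]
            rw [abs_le]
            rcases hrel' with h | h | h <;>
              (have : (j:ℤ) = 3*(a:ℤ) ∨ (j:ℤ) = 3*(a:ℤ)+1 ∨ (j:ℤ) = 3*(a:ℤ)+2 := by
                 push_cast [h]; omega
               omega)
          · have : fc k (Sum.inl j) - fc k (Sum.inr a) - dst k (Sum.inr a) (Sum.inl j) = 0 := by
              simp only [fc, dst]; ring
            rw [this]; exact dvd_zero _
      | inr b =>
          exfalso
          rcases hrel with h | h <;> exact h

end WAux


namespace WAux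

open SimpleGraph Walk

lemma forward {k : ℕ} (hk : 2 ≤ k) {v : WV k} {c : (W k).Walk v v} (hc : c.IsCycle) :
    c.length = 3 ∨ c.length = 4 ∨ (3*k ≤ c.length ∧ c.length ≤ 4*k) := by
  set ℓ := c.length with hl
  have h3 : 3 ≤ ℓ := hc.three_le_length
  have hcard : ℓ ≤ 4*k := by
    have hnd := hc.support_nodup
    have hlen : c.support.tail.length = ℓ := by
      rw [List.length_tail, Walk.length_support]
      omega
    have hle := hnd.length_le_card
    have hcardV : Fintype.card (WV k) = 3*k + k := by simp
    rw [hlen, hcardV] at hle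
    omega
  set S : ℕ → ℤ := fun t =>
    fc k v + ∑ i ∈ Finset.range t, dst k (c.getVert i) (c.getVert (i+1)) with hS
  have hS0 : S 0 = fc k v := by simp [hS]
  have hadj : ∀ t < ℓ, (W k).Adj (c.getVert t) (c.getVert (t+1)) :=
    fun t ht => c.adj_getVert_succ ht
  have hstepS : ∀ t, S (t+1) = S t + dst k (c.getVert t) (c.getVert (t+1)) := by
    intro t; simp only [hS, Finset.sum_range_succ]; ring
  have habs : ∀ t < ℓ, |S (t+1) - S t| ≤ 1 := by
    intro t ht
    rw [hstepS t, show S t + dst k (c.getVert t) (c.getVert (t+1)) - S t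
      = dst k (c.getVert t) (c.getVert (t+1)) by ring]
    exact (step_bound hk (hadj t ht)).1
  have hdvd : ∀ t ≤ ℓ, (3*(k:ℤ)) ∣ (fc k (c.getVert t) - S t) := by
    intro t
    induction t with
    | zero => intro _; rw [hS0]; simp
    | succ t ih =>
        intro ht
        have h1 := ih (by omega)
        have h2 := (step_bound hk (hadj t (by omega))).2
        have h4 : fc k (c.getVert (t+1)) - S (t+1) =
            (fc k (c.getVert (t+1)) - fc k (c.getVert t)
              - dst k (c.getVert t) (c.getVert (t+1)))
            + (fc k (c.getVert t) - S t) := by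
          rw [hstepS t]; ring
        rw [h4]; exact dvd_add h2 h1
  have hgvl : c.getVert ℓ = v := c.getVert_length
  have hSl : (3*(k:ℤ)) ∣ S ℓ - fc k v := by
    have h := hdvd ℓ (le_refl ℓ)
    rw [hgvl] at h
    have : S ℓ - fc k v = -(fc k v - S ℓ) := by ring
    rw [this]; exact dvd_neg.mpr h
  by_cases hw : S ℓ = fc k v
  · -- contractible case: show ℓ ≤ 4
    have hclose : S ℓ = S 0 := by rw [hS0]; exact hw
    have hNe := CycAux.cycle_getVert_ne hc
    have hNe' : ∀ s t, 1 ≤ s → s ≤ ℓ → 1 ≤ t → t ≤ ℓ → s ≠ t →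
        c.getVert s ≠ c.getVert t := by
      intro s t h1 h2 h3 h4 h5
      rcases Nat.lt_or_ge s t with h | h
      · exact hNe s t h1 h h4
      · intro heq
        have : t < s := by omega
        exact hNe t s h3 this h2 heq.symm
    have hfc_eq : ∀ s t, s ≤ ℓ → t ≤ ℓ → S s = S t →
        fc k (c.getVert s) = fc k (c.getVert t) := by
      intro s t h2 h4 h6
      have d1 := hdvd s h2; have d2 := hdvd t h4
      have hd : (3*(k:ℤ)) ∣ (fc k (c.getVert s) - fc k (c.getVert t)) := by
        have he : fc k (c.getVert s) - fc k (c.getVert t) =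
            (fc k (c.getVert s) - S s) - (fc k (c.getVert t) - S t) := by
          rw [h6]; ring
        rw [he]; exact dvd_sub d1 d2
      have b1 := fc_nonneg k (c.getVert s)
      have b2 := fc_lt k (by omega) (c.getVert s)
      have b3 := fc_nonneg k (c.getVert t)
      have b4 := fc_lt k (by omega) (c.getVert t)
      have h0 := Int.eq_zero_of_abs_lt_dvd hd (by rw [abs_lt]; constructor <;> omega)
      omega
    have hlevel : ∀ s t, 1 ≤ s → s ≤ ℓ → 1 ≤ t → t ≤ ℓ → s ≠ t → S s = S t →
        S s % 3 = 1 := by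
      intro s t h1 h2 h3 h4 h5 h6
      have hv := hNe' s t h1 h2 h3 h4 h5
      have hfc := hfc_eq s t h2 h4 h6
      have h31 := fc_eq_of_ne hv hfc
      have hd3 : (3:ℤ) ∣ (fc k (c.getVert s) - S s) :=
        dvd_trans ⟨(k:ℤ), rfl⟩ (hdvd s h2)
      omega
    have hno3 : ∀ s t u, 1 ≤ s → s ≤ ℓ → 1 ≤ t → t ≤ ℓ → 1 ≤ u → u ≤ ℓ →
        s ≠ t → t ≠ u → s ≠ u → S s = S t → S t = S u → False := by
      intro s t u h1 h2 h3 h4 h5 h6 h7 h8 h9 e1 e2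
      exact fc_no_three (hNe' s t h1 h2 h3 h4 h7) (hNe' t u h3 h4 h5 h6 h8)
        (hNe' s u h1 h2 h5 h6 h9)
        (hfc_eq s t h2 h4 e1) (hfc_eq t u h4 h6 e2)
    have hTT : (0:ℕ) ∈ Finset.Icc 0 ℓ := by simp
    set M := (Finset.Icc 0 ℓ).sup' ⟨0, hTT⟩ S with hM
    set m := (Finset.Icc 0 ℓ).inf' ⟨0, hTT⟩ S with hm
    have hmle : ∀ t ≤ ℓ, m ≤ S t := fun t ht =>
      Finset.inf'_le _ (by simp; omega)
    have hleM : ∀ t ≤ ℓ, S t ≤ M := fun t ht =>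
      Finset.le_sup' _ (by simp; omega)
    obtain ⟨b, hbmem, hbM⟩ := Finset.exists_mem_eq_sup' ⟨0, hTT⟩ S
    obtain ⟨a, hamem, ham⟩ := Finset.exists_mem_eq_inf' ⟨0, hTT⟩ S
    have hb : b ≤ ℓ := by simp at hbmem; omega
    have ha : a ≤ ℓ := by simp at hamem; omega
    have hMm : M ≤ m + 2 := by
      by_contra hMm
      push_neg at hMm
      set cc := if (m+1) % 3 = 1 then m+2 else m+1 with hcc
      have hcc1 : cc % 3 ≠ 1 := by
        rw [hcc]; split_ifs with h <;> omega
      have hccm : m < cc ∧ cc < M := by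
        rw [hcc]; split_ifs with h <;> omega
      obtain ⟨s, t, hs1, hs2, ht1, ht2, hst, hsc, htc⟩ :=
        CycAux.double_hit S ℓ habs hclose a b ha hb cc
          (by rw [← ham]; exact hccm.1) (by rw [← hbM]; exact hccm.2)
      have := hlevel s t hs1 hs2 ht1 ht2 hst (hsc.trans htc.symm)
      rw [hsc] at this
      exact hcc1 this
    -- counting
    set c' := if m % 3 = 1 then m else if (m+1) % 3 = 1 then m+1 else m+2 with hc'
    have hc'u : ∀ z, m ≤ z → z ≤ m+2 → z % 3 = 1 → z = c' := by
      intro z h1 h2 h4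
      rw [hc']; split_ifs with ha1 ha2 <;> omega
    have hc'r : m ≤ c' ∧ c' ≤ m + 2 := by
      rw [hc']; split_ifs <;> omega
    have hcardT : (Finset.Icc 1 ℓ).card = ℓ := by
      rw [Nat.card_Icc]; omega
    have hT1 : ((Finset.Icc 1 ℓ).filter (fun t => S t = c')).card ≤ 2 := by
      by_contra h
      push_neg at h
      obtain ⟨s, hs, t, ht, u, hu, hst, hsu, htu⟩ := Finset.two_lt_card.mp h
      simp only [Finset.mem_filter, Finset.mem_Icc] at hs ht hu
      exact hno3 s t u hs.1.1 hs.1.2 ht.1.1 ht.1.2 hu.1.1 hu.1.2 hst htu hsu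
        (hs.2.trans ht.2.symm) (ht.2.trans hu.2.symm)
    have hT2 : ((Finset.Icc 1 ℓ).filter (fun t => ¬ S t = c')).card ≤ 2 := by
      have hmaps : ∀ t ∈ (Finset.Icc 1 ℓ).filter (fun t => ¬ S t = c'),
          S t ∈ (Finset.Icc m M).erase c' := by
        intro t ht
        simp only [Finset.mem_filter, Finset.mem_Icc] at ht
        rw [Finset.mem_erase, Finset.mem_Icc]
        exact ⟨ht.2, hmle t ht.1.2, hleM t ht.1.2⟩
      have hinj : Set.InjOn S ((Finset.Icc 1 ℓ).filter (fun t => ¬ S t = c')) := by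
        intro s hs t ht heq
        simp only [Finset.coe_filter, Set.mem_setOf_eq, Finset.mem_Icc] at hs ht
        by_contra hne
        have := hlevel s t hs.1.1 hs.1.2 ht.1.1 ht.1.2 hne heq
        have := hc'u (S s) (hmle s hs.1.2) (by have := hleM s hs.1.2; omega) this
        exact hs.2 this
      have hle := Finset.card_le_card_of_injOn S hmaps hinj
      have herase : ((Finset.Icc m M).erase c').card ≤ 2 := by
        rcases Nat.lt_or_ge 1 2 with _ | _
        · rcases le_or_gt M (m+1) with hM1 | hM1
          · calc ((Finset.Icc m M).erase c').card ≤ (Finset.Icc m M).card :=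
                  Finset.card_le_card (Finset.erase_subset _ _)
              _ ≤ 2 := by rw [Int.card_Icc]; omega
          · have hM2 : M = m + 2 := by omega
            have hc'mem : c' ∈ Finset.Icc m M := by
              rw [Finset.mem_Icc]; omega
            rw [Finset.card_erase_of_mem hc'mem, Int.card_Icc]
            omega
        · omega
      omega
    have hl4 : ℓ ≤ 4 := by
      have h7 : ((Finset.Icc 1 ℓ).filter (fun t => S t = c')).card
          + ((Finset.Icc 1 ℓ).filter (fun t => ¬ S t = c')).card
          = (Finset.Icc 1 ℓ).card :=
        Finset.card_filter_add_card_filter_not (fun t => S t = c')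
      omega
    rcases (by omega : ℓ = 3 ∨ ℓ = 4) with h | h
    · exact Or.inl h
    · exact Or.inr (Or.inl h)
  · -- winding case
    have h1 : (3*(k:ℤ)) ≤ |S ℓ - fc k v| :=
      Int.le_of_dvd (abs_pos.mpr (sub_ne_zero.mpr hw)) ((dvd_abs _ _).mpr hSl)
    have h2 : ∀ t ≤ ℓ, |S t - fc k v| ≤ t := by
      intro t
      induction t with
      | zero => intro _; simp [hS0]
      | succ t ih =>
          intro ht
          have h4 := habs t (by omega)
          have h5 := ih (by omega)
          have he : S (t+1) - fc k v = (S (t+1) - S t) + (S t - fc k v) := by ring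
          rw [he]
          refine le_trans (abs_add_le _ _) ?_
          push_cast
          omega
    have h6 := h2 ℓ (le_refl ℓ)
    refine Or.inr (Or.inr ⟨?_, hcard⟩)
    have : (3*(k:ℤ)) ≤ (ℓ:ℤ) := le_trans h1 h6
    exact_mod_cast this

end WAux


namespace WAux

open SimpleGraph

lemma smod {n i : ℕ} (hn : 0 < n) (hi : i < n) :
    (i+1) % n = if i + 1 = n then 0 else i + 1 := by
  split_ifs with h
  · rw [h, Nat.mod_self]
  · exact Nat.mod_eq_of_lt (by omega)

lemma adj_rim {k : ℕ} (hk : 2 ≤ k) (i j : ℕ) (hi : i < 3*k) (hj : j < 3*k)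
    (hij : j = (i+1) % (3*k)) :
    (W k).Adj (Sum.inl ⟨i, hi⟩) (Sum.inl ⟨j, hj⟩) := by
  rw [W, SimpleGraph.fromRel_adj]
  constructor
  · intro h
    simp only [Sum.inl.injEq, Fin.mk.injEq] at h
    rw [smod (by omega) (by omega)] at hij
    split_ifs at hij <;> omega
  · exact Or.inl hij

lemma adj_hub {k : ℕ} (hk : 2 ≤ k) (a j : ℕ) (ha : a < k) (hj : j < 3*k)
    (hr : j = 3*a ∨ j = 3*a+1 ∨ j = 3*a+2) :
    (W k).Adj (Sum.inr ⟨a, ha⟩) (Sum.inl ⟨j, hj⟩) := by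
  rw [W, SimpleGraph.fromRel_adj]
  exact ⟨by simp, Or.inl hr⟩

lemma exists_tri {k : ℕ} (hk : 2 ≤ k) :
    ∃ (v : WV k) (c : (W k).Walk v v), c.IsCycle ∧ c.length = 3 := by
  let g : ℕ → WV k := fun t => match t with
    | 0 => Sum.inl ⟨0, by omega⟩
    | 1 => Sum.inl ⟨1, by omega⟩
    | 2 => Sum.inr ⟨0, by omega⟩
    | _ => Sum.inl ⟨0, by omega⟩
  refine CycAux.exists_cycle 3 (le_refl 3) g ?_ rfl ?_
  · intro t ht
    interval_cases t
    · exact adj_rim hk 0 1 (by omega) (by omega)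
        (by rw [smod (by omega) (by omega)]; split_ifs <;> omega)
    · exact (adj_hub hk 0 1 (by omega) (by omega) (by omega)).symm
    · exact adj_hub hk 0 0 (by omega) (by omega) (by omega)
  · intro s t hst htn heq
    interval_cases t <;> interval_cases s <;> simp_all [g]

lemma exists_quad {k : ℕ} (hk : 2 ≤ k) :
    ∃ (v : WV k) (c : (W k).Walk v v), c.IsCycle ∧ c.length = 4 := by
  let g : ℕ → WV k := fun t => match t with
    | 0 => Sum.inl ⟨0, by omega⟩
    | 1 => Sum.inl ⟨1, by omega⟩
    | 2 => Sum.inl ⟨2, by omega⟩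
    | 3 => Sum.inr ⟨0, by omega⟩
    | _ => Sum.inl ⟨0, by omega⟩
  refine CycAux.exists_cycle 4 (by omega) g ?_ rfl ?_
  · intro t ht
    interval_cases t
    · exact adj_rim hk 0 1 (by omega) (by omega)
        (by rw [smod (by omega) (by omega)]; split_ifs <;> omega)
    · exact adj_rim hk 1 2 (by omega) (by omega)
        (by rw [smod (by omega) (by omega)]; split_ifs <;> omega)
    · exact (adj_hub hk 0 2 (by omega) (by omega) (by omega)).symm
    · exact adj_hub hk 0 0 (by omega) (by omega) (by omega)
  · intro s t hst htn heq
    interval_cases t <;> interval_cases s <;> simp_all [g]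

/-- the long-cycle vertex sequence -/
def gd (k m : ℕ) (hk : 2 ≤ k) (hm : m ≤ k) : ℕ → WV k := fun t =>
  if h : t < 4*m then
    if t % 4 = 0 then Sum.inl ⟨3*(t/4), by omega⟩
    else if t % 4 = 1 then Sum.inr ⟨t/4, by omega⟩
    else if t % 4 = 2 then Sum.inl ⟨3*(t/4)+1, by omega⟩
    else Sum.inl ⟨3*(t/4)+2, by omega⟩
  else Sum.inl ⟨(t - m) % (3*k), Nat.mod_lt _ (by omega)⟩

variable {k m : ℕ} (hk : 2 ≤ k) (hm : m ≤ k)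

lemma gd_eval0 {t : ℕ} (h : t < 4*m) (h0 : t % 4 = 0) :
    gd k m hk hm t = Sum.inl ⟨3*(t/4), by omega⟩ := by
  simp only [gd]; rw [dif_pos h, if_pos h0]

lemma gd_eval1 {t : ℕ} (h : t < 4*m) (h0 : t % 4 = 1) :
    gd k m hk hm t = Sum.inr ⟨t/4, by omega⟩ := by
  simp only [gd]; rw [dif_pos h, if_neg (by omega), if_pos h0]

lemma gd_eval2 {t : ℕ} (h : t < 4*m) (h0 : t % 4 = 2) :
    gd k m hk hm t = Sum.inl ⟨3*(t/4)+1, by omega⟩ := by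
  simp only [gd]; rw [dif_pos h, if_neg (by omega), if_neg (by omega), if_pos h0]

lemma gd_eval3 {t : ℕ} (h : t < 4*m) (h0 : t % 4 = 3) :
    gd k m hk hm t = Sum.inl ⟨3*(t/4)+2, by omega⟩ := by
  simp only [gd]
  rw [dif_pos h, if_neg (by omega), if_neg (by omega), if_neg (by omega)]

lemma gd_evalr {t : ℕ} (h : ¬ t < 4*m) :
    gd k m hk hm t = Sum.inl ⟨(t - m) % (3*k), Nat.mod_lt _ (by omega)⟩ := by
  simp only [gd]; rw [dif_neg h]

/-- decoding function -/
def cd {k : ℕ} : WV k → ℕ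
  | Sum.inl i => 4*((i:ℕ)/3) + (if (i:ℕ) % 3 = 0 then 0 else (i:ℕ) % 3 + 1)
  | Sum.inr a => 4*(a:ℕ)+1

lemma gd_cd : ∀ t < 4*m, cd (gd k m hk hm t) = t := by
  intro t h
  rcases (by omega : t % 4 = 0 ∨ t % 4 = 1 ∨ t % 4 = 2 ∨ t % 4 = 3) with h0 | h0 | h0 | h0
  · rw [gd_eval0 hk hm h h0]; simp only [cd]; split_ifs with h1 <;> omega
  · rw [gd_eval1 hk hm h h0]; simp only [cd]; omega
  · rw [gd_eval2 hk hm h h0]; simp only [cd]; split_ifs with h1 <;> omega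
  · rw [gd_eval3 hk hm h h0]; simp only [cd]; split_ifs with h1 <;> omega

lemma gd_adj : ∀ t < 3*k+m, (W k).Adj (gd k m hk hm t) (gd k m hk hm (t+1)) := by
  intro t ht
  by_cases h1 : t < 4*m
  · rcases (by omega : t % 4 = 0 ∨ t % 4 = 1 ∨ t % 4 = 2 ∨ t % 4 = 3) with h0 | h0 | h0 | h0
    · rw [gd_eval0 hk hm h1 h0, gd_eval1 hk hm (by omega) (by omega)]
      exact (adj_hub hk ((t+1)/4) (3*(t/4)) (by omega) (by omega) (by omega)).symm
    · rw [gd_eval1 hk hm h1 h0, gd_eval2 hk hm (by omega) (by omega)]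
      exact adj_hub hk (t/4) (3*((t+1)/4)+1) (by omega) (by omega) (by omega)
    · rw [gd_eval2 hk hm h1 h0, gd_eval3 hk hm (by omega) (by omega)]
      exact adj_rim hk (3*(t/4)+1) (3*((t+1)/4)+2) (by omega) (by omega)
        (by rw [smod (by omega) (by omega)]; split_ifs <;> omega)
    · rw [gd_eval3 hk hm h1 h0]
      by_cases h2 : t+1 < 4*m
      · rw [gd_eval0 hk hm h2 (by omega)]
        exact adj_rim hk (3*(t/4)+2) (3*((t+1)/4)) (by omega) (by omega)
          (by rw [smod (by omega) (by omega)]; split_ifs <;> omega)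
      · rw [gd_evalr hk hm h2]
        exact adj_rim hk (3*(t/4)+2) ((t+1-m) % (3*k)) (by omega)
          (Nat.mod_lt _ (by omega))
          (by rw [show 3*(t/4)+2+1 = t+1-m by omega])
  · have h2 : ¬ t + 1 < 4*m := by omega
    rw [gd_evalr hk hm h1, gd_evalr hk hm h2]
    exact adj_rim hk ((t-m) % (3*k)) ((t+1-m) % (3*k)) (Nat.mod_lt _ (by omega))
      (Nat.mod_lt _ (by omega))
      (by rw [Nat.mod_eq_of_lt (show t - m < 3*k by omega),
            show t+1-m = (t-m)+1 by omega])

lemma gd_close : gd k m hk hm (3*k+m) = gd k m hk hm 0 := by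
  rw [gd_evalr hk hm (by omega)]
  by_cases hm0 : 0 < 4*m
  · rw [gd_eval0 hk hm hm0 (by omega)]
    congr 1
    apply Fin.ext
    show (3*k+m-m) % (3*k) = 3*(0/4)
    rw [show 3*k+m-m = 3*k by omega, Nat.mod_self]
  · rw [gd_evalr hk hm (by omega)]
    congr 1
    apply Fin.ext
    show (3*k+m-m) % (3*k) = (0-m) % (3*k)
    rw [show 3*k+m-m = 3*k by omega, Nat.mod_self, show 0-m = 0 by omega,
      Nat.zero_mod]

lemma gd_inj : ∀ s t, s < t → t < 3*k+m → gd k m hk hm s ≠ gd k m hk hm t := by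
  intro s t hst htn heq
  by_cases hs1 : s < 4*m <;> by_cases ht1 : t < 4*m
  · have := gd_cd hk hm s hs1
    have := gd_cd hk hm t ht1
    rw [heq] at *
    omega
  · -- s detour, t rim
    rw [gd_evalr hk hm ht1] at heq
    have htm : (t - m) % (3*k) = t - m := Nat.mod_eq_of_lt (by omega)
    rcases (by omega : s % 4 = 0 ∨ s % 4 = 1 ∨ s % 4 = 2 ∨ s % 4 = 3) with h0 | h0 | h0 | h0
    · rw [gd_eval0 hk hm hs1 h0] at heq
      simp only [Sum.inl.injEq, Fin.mk.injEq, htm] at heq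
      omega
    · rw [gd_eval1 hk hm hs1 h0] at heq
      simp at heq
    · rw [gd_eval2 hk hm hs1 h0] at heq
      simp only [Sum.inl.injEq, Fin.mk.injEq, htm] at heq
      omega
    · rw [gd_eval3 hk hm hs1 h0] at heq
      simp only [Sum.inl.injEq, Fin.mk.injEq, htm] at heq
      omega
  · omega
  · rw [gd_evalr hk hm hs1, gd_evalr hk hm ht1] at heq
    simp only [Sum.inl.injEq, Fin.mk.injEq,
      Nat.mod_eq_of_lt (show s - m < 3*k by omega),
      Nat.mod_eq_of_lt (show t - m < 3*k by omega)] at heq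
    omega

lemma exists_big {k : ℕ} (hk : 2 ≤ k) (m : ℕ) (hm : m ≤ k) :
    ∃ (v : WV k) (c : (W k).Walk v v), c.IsCycle ∧ c.length = 3*k+m :=
  CycAux.exists_cycle (3*k+m) (by omega) (gd k m hk hm)
    (gd_adj hk hm) (gd_close hk hm) (gd_inj hk hm)

end WAux

/-- For every integer `k ≥ 2`, the set of lengths of cycles of `W k` is exactly
`{3, 4} ∪ {3k, 3k+1, …, 4k}`. -/
theorem stmt_2 (k : ℕ) (hk : 2 ≤ k) :
    ∀ ℓ : ℕ, (∃ (v : WV k) (c : (W k).Walk v v), c.IsCycle ∧ c.length = ℓ) ↔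
      (ℓ = 3 ∨ ℓ = 4 ∨ (3*k ≤ ℓ ∧ ℓ ≤ 4*k)) := by
  intro ℓ
  constructor
  · rintro ⟨v, c, hc, rfl⟩
    exact WAux.forward hk hc
  · rintro (rfl | rfl | ⟨h1, h2⟩)
    · exact WAux.exists_tri hk
    · exact WAux.exists_quad hk
    · obtain ⟨v, c, hc, hlen⟩ := WAux.exists_big hk (ℓ - 3*k) (by omega)
      exact ⟨v, c, hc, by omega⟩
end

section
/- For every integer k ≥ 1, every cycle of the graph H_k has length at most 2k+1, and H_k contains a cycle of length exactly 2k+1; that is, the circumference of H_k equals 2k+1. -/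
/-- Vertices of `H k`: `Sum.inl i` is `xᵢ`, `Sum.inr i` is `yᵢ` (for `i ∈ Fin (2k+1)`). -/
abbrev HV (k : ℕ) := Fin (2*k+1) ⊕ Fin (2*k+1)

/-- Generating relation for the edges of `H k`: the cycle `x₀ x₁ … x_{2k} x₀`, the cycle
`y₀ y₁ … y_{2k} y₀`, the chords `xᵢ x_{2k-i}` and `yᵢ y_{2k-i}` for `1 ≤ i ≤ k-1`,
and the edge `x_k y_k`. -/
def HRel (k : ℕ) : HV k → HV k → Prop
  | Sum.inl i, Sum.inl j =>
      (j : ℕ) = ((i : ℕ) + 1) % (2*k+1) ∨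
        (1 ≤ (i : ℕ) ∧ (i : ℕ) ≤ k - 1 ∧ (j : ℕ) = 2*k - (i : ℕ))
  | Sum.inr i, Sum.inr j =>
      (j : ℕ) = ((i : ℕ) + 1) % (2*k+1) ∨
        (1 ≤ (i : ℕ) ∧ (i : ℕ) ≤ k - 1 ∧ (j : ℕ) = 2*k - (i : ℕ))
  | Sum.inl i, Sum.inr j => (i : ℕ) = k ∧ (j : ℕ) = k
  | _, _ => False

/-- The graph `H k`. -/
def H (k : ℕ) : SimpleGraph (HV k) := SimpleGraph.fromRel (HRel k)

namespace Stmt3Aux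

/-- `x_k` -/
def xk (k : ℕ) : HV k := Sum.inl ⟨k, by omega⟩
/-- `y_k` -/
def yk (k : ℕ) : HV k := Sum.inr ⟨k, by omega⟩

/-- Any adjacency between the two sides is the edge `x_k y_k`. -/
lemma cross_eq {k : ℕ} {a b : HV k} (h : (H k).Adj a b) (hs : a.isLeft ≠ b.isLeft) :
    s(a, b) = s(xk k, yk k) := by
  rcases a with a | a <;> rcases b with b | b <;> simp at hs
  · -- inl, inr
    obtain ⟨hne, h | h⟩ := h
    · obtain ⟨h1, h2⟩ := h
      have ha : Sum.inl a = xk k := congrArg Sum.inl (Fin.ext h1)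
      have hb : Sum.inr b = yk k := congrArg Sum.inr (Fin.ext h2)
      rw [ha, hb]
    · exact h.elim
  · -- inr, inl
    obtain ⟨hne, h | h⟩ := h
    · exact h.elim
    · obtain ⟨h1, h2⟩ := h
      have hb : Sum.inl b = xk k := congrArg Sum.inl (Fin.ext h1)
      have ha : Sum.inr a = yk k := congrArg Sum.inr (Fin.ext h2)
      rw [ha, hb, Sym2.eq_swap]

/-- A walk avoiding the edge `x_k y_k` stays on one side. -/
lemma same_side {k : ℕ} {u v : HV k} (w : (H k).Walk u v)
    (he : s(xk k, yk k) ∉ w.edges) : ∀ x ∈ w.support, x.isLeft = u.isLeft := by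
  induction w with
  | nil => intro x hx; simp at hx; subst hx; rfl
  | @cons a b c h p ih =>
    intro x hx
    rw [SimpleGraph.Walk.edges_cons, List.mem_cons] at he
    push_neg at he
    obtain ⟨he1, he2⟩ := he
    have hab : a.isLeft = b.isLeft := by
      by_contra hne
      exact he1 (cross_eq h hne).symm
    rw [SimpleGraph.Walk.support_cons] at hx
    rcases List.mem_cons.1 hx with rfl | hx
    · rfl
    · rw [ih he2 x hx, hab]

/-- The edge `x_k y_k` is a bridge. -/
lemma bridge {k : ℕ} : (H k).IsBridge s(xk k, yk k) := by
  rw [SimpleGraph.isBridge_iff]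
  · rw [SimpleGraph.reachable_delete_edges_iff_exists_walk]
    rintro ⟨p, hp⟩
    have := same_side p hp (yk k) (SimpleGraph.Walk.end_mem_support p)
    simp [xk, yk] at this

lemma adj_succ (k m : ℕ) (hm : m + 1 ≤ 2*k) :
    (H k).Adj (Sum.inl ⟨m+1, by omega⟩) (Sum.inl ⟨m, by omega⟩) := by
  rw [H, SimpleGraph.fromRel_adj]
  refine ⟨by simp, Or.inr ?_⟩
  left
  show m + 1 = (m + 1) % (2*k+1)
  exact (Nat.mod_eq_of_lt (by omega)).symm

/-- The path `x_m x_{m-1} … x_0`. -/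
def q (k : ℕ) : (m : ℕ) → (hm : m ≤ 2*k) → (H k).Walk (Sum.inl ⟨m, by omega⟩) (Sum.inl ⟨0, by omega⟩)
  | 0, _ => SimpleGraph.Walk.nil
  | (m+1), hm => SimpleGraph.Walk.cons (adj_succ k m hm) (q k m (by omega))

lemma q_support (k : ℕ) : ∀ (m : ℕ) (hm : m ≤ 2*k),
    ∀ x ∈ (q k m hm).support, ∃ a : Fin (2*k+1), x = Sum.inl a ∧ (a:ℕ) ≤ m := by
  intro m
  induction m with
  | zero => intro hm x hx; simp [q] at hx; exact ⟨⟨0, by omega⟩, hx, le_rfl⟩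
  | succ m ih =>
    intro hm x hx
    rw [q, SimpleGraph.Walk.support_cons, List.mem_cons] at hx
    rcases hx with rfl | hx
    · exact ⟨⟨m+1, by omega⟩, rfl, le_rfl⟩
    · obtain ⟨a, rfl, ha⟩ := ih (by omega) x hx
      exact ⟨a, rfl, by omega⟩

lemma q_isPath (k : ℕ) : ∀ (m : ℕ) (hm : m ≤ 2*k), (q k m hm).IsPath := by
  intro m
  induction m with
  | zero => intro hm; simp [q]
  | succ m ih =>
    intro hm
    rw [q]
    refine (ih (by omega)).cons ?_
    intro hmem
    obtain ⟨a, ha, hle⟩ := q_support k m (by omega) _ hmem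
    have := Sum.inl.inj ha
    have : (⟨m+1, by omega⟩ : Fin (2*k+1)).val = a.val := by rw [this]
    simp at this
    omega

lemma q_noclose (k : ℕ) (hk : 1 ≤ k) : ∀ (m : ℕ) (hm : m ≤ 2*k),
    s(Sum.inl (⟨0, by omega⟩ : Fin (2*k+1)), Sum.inl (⟨2*k, by omega⟩ : Fin (2*k+1)))
      ∉ (q k m hm).edges := by
  intro m
  induction m with
  | zero => intro hm; simp [q]
  | succ m ih =>
    intro hm
    rw [q, SimpleGraph.Walk.edges_cons, List.mem_cons]
    push_neg
    refine ⟨?_, ih (by omega)⟩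
    intro hEq
    rcases Sym2.eq_iff.1 hEq with ⟨h1, h2⟩ | ⟨h1, h2⟩
    · have := congrArg (fun z : HV k => Sum.elim Fin.val Fin.val z) h1
      simp at this
    · have h1' := congrArg (fun z : HV k => Sum.elim Fin.val Fin.val z) h1
      have h2' := congrArg (fun z : HV k => Sum.elim Fin.val Fin.val z) h2
      simp at h1' h2'
      omega

lemma q_length (k : ℕ) : ∀ (m : ℕ) (hm : m ≤ 2*k), (q k m hm).length = m := by
  intro m
  induction m with
  | zero => intro hm; simp [q]
  | succ m ih => intro hm; rw [q, SimpleGraph.Walk.length_cons, ih]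

end Stmt3Aux

/-- For every integer `k ≥ 1`, every cycle of `H k` has length at most `2k+1`, and
`H k` contains a cycle of length exactly `2k+1`; that is, the circumference of `H k`
equals `2k+1`. -/
theorem stmt_3 (k : ℕ) (hk : 1 ≤ k) :
    (∀ (v : HV k) (c : (H k).Walk v v), c.IsCycle → c.length ≤ 2*k + 1) ∧
    (∃ (v : HV k) (c : (H k).Walk v v), c.IsCycle ∧ c.length = 2*k + 1) := by
  constructor
  · intro v c hc
    have he : s(Stmt3Aux.xk k, Stmt3Aux.yk k) ∉ c.edges :=
      Stmt3Aux.bridge.notMem_edges_of_isCycle hc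
    have hside := Stmt3Aux.same_side c he
    have hnd : c.support.tail.Nodup := hc.2
    have hmap : (c.support.tail.map (Sum.elim id id : HV k → Fin (2*k+1))).Nodup := by
      refine List.Nodup.map_on ?_ hnd
      intro x hx y hy hxy
      have hxs := hside x (List.mem_of_mem_tail hx)
      have hys := hside y (List.mem_of_mem_tail hy)
      have hxyside : x.isLeft = y.isLeft := hxs.trans hys.symm
      rcases x with x | x <;> rcases y with y | y <;> simp_all
    have hlen := List.Nodup.length_le_card hmap
    rw [List.length_map, List.length_tail, SimpleGraph.Walk.length_support] at hlen
    simpa using hlen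
  · have hadj : (H k).Adj (Sum.inl (⟨0, by omega⟩ : Fin (2*k+1)))
        (Sum.inl (⟨2*k, by omega⟩ : Fin (2*k+1))) := by
      rw [H, SimpleGraph.fromRel_adj]
      constructor
      · intro h
        have := congrArg (fun z : HV k => Sum.elim Fin.val Fin.val z) h
        simp at this
        omega
      · right; left
        show (0 : ℕ) = (2*k + 1) % (2*k+1)
        simp
    refine ⟨Sum.inl ⟨0, by omega⟩,
      SimpleGraph.Walk.cons hadj (Stmt3Aux.q k (2*k) le_rfl), ?_, ?_⟩
    · exact SimpleGraph.Path.cons_isCycle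
        ⟨Stmt3Aux.q k (2*k) le_rfl, Stmt3Aux.q_isPath k (2*k) le_rfl⟩ hadj
        (Stmt3Aux.q_noclose k hk (2*k) le_rfl)
    · rw [SimpleGraph.Walk.length_cons, Stmt3Aux.q_length]
end

section
/- For every integer k ≥ 1 and for every choice of a ∈ {x_0, x_{2k}} and b ∈ {y_0, y_{2k}}, every path in the graph H_k from a to b has length at least 2k+1. -/
/-- Potential function: `Φ(xᵢ) = min i (2k-i)`, `Φ(yⱼ) = 2k+1 - min j (2k-j)`. -/
def Phi (k : ℕ) : HV k → ℤ
  | Sum.inl i => min (i : ℤ) (2*k - (i : ℤ))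
  | Sum.inr j => 2*k + 1 - min (j : ℤ) (2*k - (j : ℤ))

lemma phi_adj {k : ℕ} {u v : HV k} (h : (H k).Adj u v) :
    |Phi k u - Phi k v| ≤ 1 := by
  have hmod : ∀ m : ℕ, m < 2*k+1 →
      (m+1) % (2*k+1) = m+1 ∨ ((m+1) % (2*k+1) = 0 ∧ m = 2*k) := by
    intro m hm
    rcases Nat.lt_or_ge (m+1) (2*k+1) with h' | h'
    · exact Or.inl (Nat.mod_eq_of_lt h')
    · have he : m + 1 = 2*k+1 := by omega
      exact Or.inr ⟨by rw [he]; exact Nat.mod_self _, by omega⟩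
  rw [H, SimpleGraph.fromRel_adj] at h
  obtain ⟨-, h | h⟩ := h <;>
  · rcases u with ⟨i⟩ | ⟨i⟩ <;> rcases v with ⟨j⟩ | ⟨j⟩ <;>
      simp only [HRel] at h <;>
      · have hi := i.isLt
        have hj := j.isLt
        rcases hmod i i.isLt with hm | ⟨hm, hm2⟩ <;>
          rcases hmod j j.isLt with hn | ⟨hn, hn2⟩ <;>
          (try simp only [hm, hn] at h) <;>
          simp only [Phi, min_def, abs_le] <;>
          constructor <;> split_ifs <;> omega

lemma phi_walk {k : ℕ} {u v : HV k} (p : (H k).Walk u v) :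
    |Phi k u - Phi k v| ≤ (p.length : ℤ) := by
  induction p with
  | nil => simp
  | cons h q ih =>
    rename_i a b c
    calc |Phi k a - Phi k c| ≤ |Phi k a - Phi k b| + |Phi k b - Phi k c| := abs_sub_le _ _ _
    _ ≤ 1 + q.length := by have := phi_adj h; omega
    _ = _ := by simp [SimpleGraph.Walk.length_cons]; ring

/-- For every integer `k ≥ 1` and every choice of `a ∈ {x₀, x_{2k}}` and
`b ∈ {y₀, y_{2k}}`, every path in `H k` from `a` to `b` has length at least `2k+1`. -/
theorem stmt_5 (k : ℕ) (hk : 1 ≤ k) :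
    ∀ a b : HV k,
      (a = Sum.inl ⟨0, by omega⟩ ∨ a = Sum.inl ⟨2*k, by omega⟩) →
      (b = Sum.inr ⟨0, by omega⟩ ∨ b = Sum.inr ⟨2*k, by omega⟩) →
      ∀ p : (H k).Walk a b, p.IsPath → 2*k + 1 ≤ p.length := by
  intro a b ha hb p _
  have h := phi_walk p
  have hA : Phi k a = 0 := by
    rcases ha with rfl | rfl <;> simp [Phi]
  have hB : Phi k b = 2*k + 1 := by
    rcases hb with rfl | rfl <;> simp [Phi]
  rw [hA, hB, abs_sub_comm] at h
  have : (0 : ℤ) ≤ 2*k + 1 - 0 := by omega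
  rw [abs_of_nonneg this] at h
  omega
end
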